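/- arXiv:1402.2583 — 7 statements merged into one kernel-verified Lean document; each statement's English description precedes it below -/
import Mathlib

section
/- Let A ∈ ℝ^{n×n}, B ∈ ℝ^{n×m}, A₁₂ ∈ ℝ^{n×q}, A₂₂ ∈ ℝ^{q×q}, D ∈ ℝ^{p×n}, E ∈ ℝ^{p×q}. Suppose that for every complex eigenvalue s of A₂₂ the complex block matrix [[s·I_n − A, B], [D, 0]] ∈ ℂ^{(n+p)×(n+m)} has rank n + p (full row rank). Then there exist real matrices Π ∈ ℝ^{n×q} and Γ ∈ ℝ^{m×q} solving the regulator equations Π A₂₂ = A Π + A₁₂ + B Γ and 0 = D Π + E. -/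
open Matrix

section AuxRegulator

variable {a b c : Type*} [Fintype a] [Fintype b] [Fintype c] [DecidableEq b] [DecidableEq c]

private lemma sum_mul_std_aux (M : Matrix a b ℂ) (Y : Matrix a c ℂ) (k : b) (l : c) :
    ∑ i, ∑ j, (M * single k l (1:ℂ)) i j * Y i j = ∑ i, M i k * Y i l := by
  simp [Matrix.mul_apply, Matrix.single, Matrix.of_apply, ite_and, mul_ite, ite_mul,
    Finset.sum_ite_eq, Finset.sum_ite_eq']

private lemma sum_std_mul_aux [DecidableEq a] (Nc : Matrix b c ℂ) (Y : Matrix a c ℂ)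
    (k : a) (l : b) :
    ∑ i, ∑ j, (single k l (1:ℂ) * Nc) i j * Y i j = ∑ j, Nc l j * Y k j := by
  simp [Matrix.mul_apply, Matrix.single, Matrix.of_apply, ite_and, mul_ite, ite_mul,
    Finset.sum_ite_eq, Finset.sum_ite_eq']

private lemma vecMul_injective_of_rank_aux (M : Matrix a b ℂ) (h : M.rank = Fintype.card a) :
    Function.Injective M.vecMul := by
  rw [Matrix.vecMul_injective_iff, linearIndependent_iff_card_eq_finrank_span]
  rw [Set.finrank, ← Matrix.rank_eq_finrank_span_row, h]

end AuxRegulator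

/-- Solvability of the regulator equations over `ℂ`. -/
private lemma regulator_surj_complex (n m q p : ℕ)
    (Ac : Matrix (Fin n) (Fin n) ℂ) (Bc : Matrix (Fin n) (Fin m) ℂ)
    (Nc : Matrix (Fin q) (Fin q) ℂ) (Dc : Matrix (Fin p) (Fin n) ℂ)
    (hrank : ∀ s ∈ spectrum ℂ Nc,
      (fromBlocks (s • (1 : Matrix (Fin n) (Fin n) ℂ) - Ac) Bc Dc
        (0 : Matrix (Fin p) (Fin m) ℂ)).rank = n + p)
    (R₁ : Matrix (Fin n) (Fin q) ℂ) (R₂ : Matrix (Fin p) (Fin q) ℂ) :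
    ∃ (P : Matrix (Fin n) (Fin q) ℂ) (G : Matrix (Fin m) (Fin q) ℂ),
      P * Nc - Ac * P - Bc * G = R₁ ∧ Dc * P = R₂ := by
  set T : (Matrix (Fin n) (Fin q) ℂ × Matrix (Fin m) (Fin q) ℂ) →ₗ[ℂ]
      (Matrix (Fin n) (Fin q) ℂ × Matrix (Fin p) (Fin q) ℂ) :=
    { toFun := fun x => (x.1 * Nc - Ac * x.1 - Bc * x.2, Dc * x.1)
      map_add' := fun x y => by
        refine Prod.ext ?_ ?_ <;> dsimp <;>
          simp only [Matrix.add_mul, Matrix.mul_add] <;> abel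
      map_smul' := fun cc x => by
        refine Prod.ext ?_ ?_ <;> dsimp <;>
          simp [Matrix.smul_mul, Matrix.mul_smul, smul_sub] } with hTdef
  have hT : ∀ x, T x = (x.1 * Nc - Ac * x.1 - Bc * x.2, Dc * x.1) := fun x => rfl
  have hsurj : Function.Surjective T := by
    rw [← LinearMap.dualMap_injective_iff, ← LinearMap.ker_eq_bot, LinearMap.ker_eq_bot']
    intro φ hφ0
    have hφ : ∀ x, φ (T x) = 0 := by
      intro x
      have := LinearMap.ext_iff.mp hφ0 x
      simpa using this
    set Y : Matrix (Fin n) (Fin q) ℂ :=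
      Matrix.of (fun i j => φ (single i j 1, 0)) with hYdef
    set Z : Matrix (Fin p) (Fin q) ℂ :=
      Matrix.of (fun i j => φ (0, single i j 1)) with hZdef
    have hrep : ∀ (X : Matrix (Fin n) (Fin q) ℂ) (W : Matrix (Fin p) (Fin q) ℂ),
        φ (X, W) = (∑ i, ∑ j, X i j * Y i j) + ∑ i, ∑ j, W i j * Z i j := by
      intro X W
      have hXW : (X, W) =
          (∑ i, ∑ j, X i j • ((single i j (1:ℂ) : Matrix (Fin n) (Fin q) ℂ),
              (0 : Matrix (Fin p) (Fin q) ℂ)))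
          + ∑ i, ∑ j, W i j • ((0 : Matrix (Fin n) (Fin q) ℂ),
              (single i j (1:ℂ) : Matrix (Fin p) (Fin q) ℂ)) := by
        refine Prod.ext ?_ ?_
        · simp only [Prod.fst_add, Prod.fst_sum, Prod.smul_mk, smul_zero,
            Finset.sum_const_zero, add_zero, smul_single, smul_eq_mul, mul_one]
          exact matrix_eq_sum_single X
        · simp only [Prod.snd_add, Prod.snd_sum, Prod.smul_mk, smul_zero,
            Finset.sum_const_zero, zero_add, smul_single, smul_eq_mul, mul_one]
          exact matrix_eq_sum_single W
      rw [hXW, map_add, map_sum, map_sum]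
      simp only [map_sum, _root_.map_smul, smul_eq_mul]
      rfl
    have hB : Bcᵀ * Y = 0 := by
      ext k l
      have h := hφ (0, single k l 1)
      rw [hT, hrep] at h
      simp only [Matrix.zero_mul, Matrix.mul_zero, zero_sub, sub_zero, Matrix.zero_apply,
        zero_mul, Finset.sum_const_zero, add_zero, Matrix.neg_apply, neg_mul,
        Finset.sum_neg_distrib, neg_eq_zero] at h
      rw [sum_mul_std_aux] at h
      simp only [Matrix.mul_apply, Matrix.transpose_apply, Matrix.zero_apply]
      exact h
    have hM : Y * Ncᵀ = Acᵀ * Y - Dcᵀ * Z := by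
      ext k l
      have h := hφ (single k l 1, 0)
      rw [hT, hrep] at h
      simp only [Matrix.mul_zero, sub_zero, Matrix.sub_apply, sub_mul, Matrix.zero_apply,
        zero_mul, Finset.sum_const_zero, Finset.sum_sub_distrib] at h
      rw [sum_std_mul_aux, sum_mul_std_aux, sum_mul_std_aux] at h
      have e1 : (Y * Ncᵀ) k l = ∑ j, Nc l j * Y k j := by
        simp [Matrix.mul_apply, mul_comm]
      have e2 : (Acᵀ * Y) k l = ∑ i, Ac i k * Y i l := by
        simp [Matrix.mul_apply]
      have e3 : (Dcᵀ * Z) k l = ∑ i, Dc i k * Z i l := by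
        simp [Matrix.mul_apply]
      rw [Matrix.sub_apply, e1, e2, e3]
      linear_combination h
    set f : Module.End ℂ (Fin q → ℂ) := Matrix.mulVecLin Ncᵀ with hfdef
    have key : ∀ (μ : ℂ) (k : ℕ) (v : Fin q → ℂ), ((f - μ • 1) ^ k) v = 0 →
        Y.mulVec v = 0 ∧ Z.mulVec v = 0 := by
      intro μ k
      induction k with
      | zero =>
        intro v hv
        simp only [pow_zero, Module.End.one_apply] at hv
        simp [hv]
      | succ k ih =>
        intro v hv
        by_cases hμ : μ ∈ spectrum ℂ Nc
        · have hv' : ((f - μ • 1) ^ k) ((f - μ • 1) v) = 0 := by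
            rw [← Module.End.mul_apply, ← pow_succ]
            exact hv
          obtain ⟨hYw, hZw⟩ := ih _ hv'
          have happ : (f - μ • 1) v = Ncᵀ.mulVec v - μ • v := rfl
          have hNv : Ncᵀ.mulVec v = μ • v + (f - μ • 1) v := by
            rw [happ]; abel
          have lhs1 : (Y * Ncᵀ).mulVec v = μ • Y.mulVec v := by
            rw [← Matrix.mulVec_mulVec, hNv, Matrix.mulVec_add, hYw, add_zero,
              Matrix.mulVec_smul]
          have hy1 : μ • Y.mulVec v - Acᵀ.mulVec (Y.mulVec v)
              + Dcᵀ.mulVec (Z.mulVec v) = 0 := by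
            have h0 : (Y * Ncᵀ).mulVec v = (Acᵀ * Y).mulVec v - (Dcᵀ * Z).mulVec v := by
              rw [hM, Matrix.sub_mulVec]
            rw [lhs1, ← Matrix.mulVec_mulVec, ← Matrix.mulVec_mulVec] at h0
            rw [h0]; abel
          have hy2 : Bcᵀ.mulVec (Y.mulVec v) = 0 := by
            rw [Matrix.mulVec_mulVec, hB, Matrix.zero_mulVec]
          have hinj : Function.Injective
              (fromBlocks (μ • (1 : Matrix (Fin n) (Fin n) ℂ) - Ac) Bc Dc
                (0 : Matrix (Fin p) (Fin m) ℂ)).vecMul := by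
            refine vecMul_injective_of_rank_aux _ ?_
            rw [hrank μ hμ]
            simp
          have hu : Sum.elim (Y.mulVec v) (Z.mulVec v) ᵥ*
              fromBlocks (μ • (1 : Matrix (Fin n) (Fin n) ℂ) - Ac) Bc Dc
                (0 : Matrix (Fin p) (Fin m) ℂ) = 0 := by
            rw [Matrix.vecMul_fromBlocks]
            have hcl : (Sum.elim (Y.mulVec v) (Z.mulVec v)) ∘ Sum.inl = Y.mulVec v := rfl
            have hcr : (Sum.elim (Y.mulVec v) (Z.mulVec v)) ∘ Sum.inr = Z.mulVec v := rfl
            rw [hcl, hcr]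
            have e1 : Y.mulVec v ᵥ* (μ • (1 : Matrix (Fin n) (Fin n) ℂ) - Ac)
                = μ • Y.mulVec v - Acᵀ.mulVec (Y.mulVec v) := by
              rw [← Matrix.mulVec_transpose]
              simp only [Matrix.transpose_sub, Matrix.transpose_smul, Matrix.transpose_one,
                Matrix.sub_mulVec, Matrix.smul_mulVec, Matrix.one_mulVec]
            have e2 : Z.mulVec v ᵥ* Dc = Dcᵀ.mulVec (Z.mulVec v) :=
              (Matrix.mulVec_transpose Dc _).symm
            have e3 : Y.mulVec v ᵥ* Bc = Bcᵀ.mulVec (Y.mulVec v) :=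
              (Matrix.mulVec_transpose Bc _).symm
            rw [e1, e2, e3, hy1, hy2, Matrix.vecMul_zero, add_zero]
            ext s
            cases s <;> rfl
          have h0 : Sum.elim (Y.mulVec v) (Z.mulVec v) = 0 :=
            hinj (show Sum.elim (Y.mulVec v) (Z.mulVec v) ᵥ*
                fromBlocks (μ • (1 : Matrix (Fin n) (Fin n) ℂ) - Ac) Bc Dc
                  (0 : Matrix (Fin p) (Fin m) ℂ) = (0 : (Fin n ⊕ Fin p) → ℂ) ᵥ* _ by
              rw [hu, Matrix.zero_vecMul])
          exact ⟨funext fun i => congrFun h0 (Sum.inl i),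
            funext fun i => congrFun h0 (Sum.inr i)⟩
        · have hu1 : IsUnit (μ • (1 : Matrix (Fin q) (Fin q) ℂ) - Nc) := by
            have h' := spectrum.notMem_iff.mp hμ
            rwa [Algebra.algebraMap_eq_smul_one] at h'
          have hu2 : IsUnit (μ • (1 : Matrix (Fin q) (Fin q) ℂ) - Ncᵀ) := by
            have h2 : IsUnit ((μ • (1 : Matrix (Fin q) (Fin q) ℂ) - Nc)ᵀ) :=
              (Matrix.isUnit_transpose _).mpr hu1
            simpa [Matrix.transpose_sub, Matrix.transpose_smul, Matrix.transpose_one] using h2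
          have hinj2 : Function.Injective
              ((μ • (1 : Matrix (Fin q) (Fin q) ℂ) - Ncᵀ)).mulVec :=
            Matrix.mulVec_injective_iff_isUnit.mpr hu2
          have happ : ∀ w : Fin q → ℂ,
              (f - μ • 1) w = -((μ • (1 : Matrix (Fin q) (Fin q) ℂ) - Ncᵀ).mulVec w) := by
            intro w
            have : (f - μ • 1) w = Ncᵀ.mulVec w - μ • w := rfl
            rw [this, Matrix.sub_mulVec, Matrix.smul_mulVec, Matrix.one_mulVec]
            abel
          have hv'' : ((f - μ • 1) ^ k) v = 0 := by
            have h1 : (f - μ • 1) (((f - μ • 1) ^ k) v) = 0 := by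
              rw [← Module.End.mul_apply, ← pow_succ']
              exact hv
            rw [happ, neg_eq_zero] at h1
            apply hinj2
            rw [h1, Matrix.mulVec_zero]
          exact ih v hv''
    have hker : ∀ v : Fin q → ℂ, Y.mulVec v = 0 ∧ Z.mulVec v = 0 := by
      intro v
      have hv : v ∈ (⊤ : Submodule ℂ (Fin q → ℂ)) := Submodule.mem_top
      rw [← Module.End.iSup_maxGenEigenspace_eq_top f] at hv
      refine Submodule.iSup_induction (motive := fun w => Y.mulVec w = 0 ∧ Z.mulVec w = 0)
        _ hv (fun μ x hx => ?_) ⟨Matrix.mulVec_zero _, Matrix.mulVec_zero _⟩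
        (fun x y hx hy => ?_)
      · obtain ⟨k, hk⟩ := (Module.End.mem_maxGenEigenspace f μ x).mp hx
        exact key μ k x hk
      · exact ⟨by rw [Matrix.mulVec_add, hx.1, hy.1, add_zero],
          by rw [Matrix.mulVec_add, hx.2, hy.2, add_zero]⟩
    have hY0 : Y = 0 := by
      ext i j
      have h1 := congrFun (hker (Pi.single j 1)).1 i
      simpa [Matrix.mulVec_single] using h1
    have hZ0 : Z = 0 := by
      ext i j
      have h1 := congrFun (hker (Pi.single j 1)).2 i
      simpa [Matrix.mulVec_single] using h1
    apply LinearMap.ext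
    intro x
    have hx : φ (x.1, x.2) = 0 := by
      rw [hrep, hY0, hZ0]; simp
    simpa using hx
  obtain ⟨x, hx⟩ := hsurj (R₁, R₂)
  rw [hT] at hx
  exact ⟨x.1, x.2, congrArg Prod.fst hx, congrArg Prod.snd hx⟩

/-- solvability part of Lemma 1.
If for every complex eigenvalue `s` of `A₂₂` the block matrix
`[[s·I − A, B], [D, 0]]` has full row rank `n + p`, then the regulator
equations `Π A₂₂ = A Π + A₁₂ + B Γ` and `0 = D Π + E` are solvable. -/
theorem regulator_equations_solvable
    (n m q p : ℕ)
    (A : Matrix (Fin n) (Fin n) ℝ) (B : Matrix (Fin n) (Fin m) ℝ)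
    (A₁₂ : Matrix (Fin n) (Fin q) ℝ) (A₂₂ : Matrix (Fin q) (Fin q) ℝ)
    (D : Matrix (Fin p) (Fin n) ℝ) (E : Matrix (Fin p) (Fin q) ℝ)
    (hrank : ∀ s ∈ spectrum ℂ (A₂₂.map (algebraMap ℝ ℂ)),
      (Matrix.fromBlocks
        (s • (1 : Matrix (Fin n) (Fin n) ℂ) - A.map (algebraMap ℝ ℂ))
        (B.map (algebraMap ℝ ℂ))
        (D.map (algebraMap ℝ ℂ)) (0 : Matrix (Fin p) (Fin m) ℂ)).rank = n + p) :
    ∃ (Pi' : Matrix (Fin n) (Fin q) ℝ) (Ga' : Matrix (Fin m) (Fin q) ℝ),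
      Pi' * A₂₂ = A * Pi' + A₁₂ + B * Ga' ∧ (0 : Matrix (Fin p) (Fin q) ℝ) = D * Pi' + E := by
  obtain ⟨P, G, h1, h2⟩ := regulator_surj_complex n m q p
    (A.map (algebraMap ℝ ℂ)) (B.map (algebraMap ℝ ℂ)) (A₂₂.map (algebraMap ℝ ℂ))
    (D.map (algebraMap ℝ ℂ)) hrank
    (A₁₂.map (algebraMap ℝ ℂ)) (-(E.map (algebraMap ℝ ℂ)))
  refine ⟨Matrix.of (fun i j => (P i j).re), Matrix.of (fun i j => (G i j).re), ?_, ?_⟩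
  · ext i j
    have hc := congrFun (congrFun h1 i) j
    simp only [Matrix.sub_apply, Matrix.map_apply, Matrix.mul_apply] at hc
    have hre := congrArg Complex.re hc
    simp only [Complex.sub_re, Complex.re_sum] at hre
    have e1 : ∀ k : Fin q, (P i k * (algebraMap ℝ ℂ) (A₂₂ k j)).re
        = (P i k).re * A₂₂ k j := by
      intro k
      rw [show (algebraMap ℝ ℂ) (A₂₂ k j) = ((A₂₂ k j : ℝ) : ℂ) from rfl, mul_comm,
        Complex.re_ofReal_mul, mul_comm]
    have e2 : ∀ k : Fin n, ((algebraMap ℝ ℂ) (A i k) * P k j).re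
        = A i k * (P k j).re := fun k => by
      rw [show (algebraMap ℝ ℂ) (A i k) = ((A i k : ℝ) : ℂ) from rfl, Complex.re_ofReal_mul]
    have e3 : ∀ k : Fin m, ((algebraMap ℝ ℂ) (B i k) * G k j).re
        = B i k * (G k j).re := fun k => by
      rw [show (algebraMap ℝ ℂ) (B i k) = ((B i k : ℝ) : ℂ) from rfl, Complex.re_ofReal_mul]
    simp only [e1, e2, e3, Complex.ofReal_re] at hre
    simp only [Matrix.add_apply, Matrix.mul_apply, Matrix.of_apply]
    have : (algebraMap ℝ ℂ) (A₁₂ i j) = ((A₁₂ i j : ℝ) : ℂ) := rfl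
    rw [this, Complex.ofReal_re] at hre
    linarith [hre]
  · ext i j
    have hc := congrFun (congrFun h2 i) j
    simp only [Matrix.neg_apply, Matrix.map_apply, Matrix.mul_apply] at hc
    have hre := congrArg Complex.re hc
    simp only [Complex.re_sum, Complex.neg_re] at hre
    have e2 : ∀ k : Fin n, ((algebraMap ℝ ℂ) (D i k) * P k j).re
        = D i k * (P k j).re := fun k => by
      rw [show (algebraMap ℝ ℂ) (D i k) = ((D i k : ℝ) : ℂ) from rfl, Complex.re_ofReal_mul]
    simp only [e2] at hre
    have : (algebraMap ℝ ℂ) (E i j) = ((E i j : ℝ) : ℂ) := rfl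
    rw [this, Complex.ofReal_re] at hre
    simp only [Matrix.zero_apply, Matrix.add_apply, Matrix.mul_apply, Matrix.of_apply]
    linarith [hre]
end

section
/- Let A ∈ ℝ^{n×n}, B ∈ ℝ^{n×m}, A₁₂ ∈ ℝ^{n×q}, A₂₂ ∈ ℝ^{q×q}, D ∈ ℝ^{p×n}, E ∈ ℝ^{p×q}. Suppose Π ∈ ℝ^{n×q} and Γ ∈ ℝ^{m×q} satisfy the regulator equations Π A₂₂ = A Π + A₁₂ + B Γ and 0 = D Π + E, and F ∈ ℝ^{m×n} is such that A + B F is Hurwitz. Let x₁ : ℝ → ℝ^n and x₂ : ℝ → ℝ^q be differentiable and satisfy, for all t ≥ 0, ẋ₂(t) = A₂₂ x₂(t) and ẋ₁(t) = A x₁(t) + A₁₂ x₂(t) + B u(t), where u(t) = F (x₁(t) − Π x₂(t)) + Γ x₂(t). Then the regulation error e(t) = D x₁(t) + E x₂(t) tends to 0 as t → ∞. -/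
open Matrix Filter

/-- A real square matrix is Hurwitz if every complex eigenvalue has negative real part. -/
def IsHurwitz {α : Type*} [Fintype α] [DecidableEq α] (M : Matrix α α ℝ) : Prop :=
  ∀ μ ∈ spectrum ℂ (M.map (algebraMap ℝ ℂ)), μ.re < 0

section Aux

open NormedSpace

lemma hasDerivAt_exp_smul_entry {n : ℕ} (M : Matrix (Fin n) (Fin n) ℝ) (t : ℝ) (i j : Fin n) :
    HasDerivAt (fun u : ℝ => exp (u • M) i j) ((exp (t • M) * M) i j) t := by
  letI : NormedRing (Matrix (Fin n) (Fin n) ℝ) := Matrix.linftyOpNormedRing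
  letI : NormedAlgebra ℝ (Matrix (Fin n) (Fin n) ℝ) := Matrix.linftyOpNormedAlgebra
  have h := hasDerivAt_exp_smul_const (𝕂 := ℝ) M t
  let L : Matrix (Fin n) (Fin n) ℝ →ₗ[ℝ] ℝ :=
    { toFun := fun A => A i j
      map_add' := fun A B => rfl
      map_smul' := fun c A => rfl }
  have := (L.toContinuousLinearMap.hasFDerivAt
    (x := exp (t • M))).comp_hasDerivAt t h
  exact this

lemma matexp_inv_mul {n : ℕ} (M : Matrix (Fin n) (Fin n) ℝ) (t : ℝ) :
    exp (t • M) * exp ((-t) • M) = 1 := by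
  rw [← Matrix.exp_add_of_commute _ _ (((Commute.refl M).smul_left t).smul_right (-t))]
  rw [← add_smul, add_neg_cancel, zero_smul, exp_zero]

lemma ode_solution {n : ℕ} (M : Matrix (Fin n) (Fin n) ℝ) (z : ℝ → Fin n → ℝ)
    (hz : ∀ t : ℝ, 0 ≤ t → HasDerivAt z (M *ᵥ z t) t) :
    ∀ t : ℝ, 0 ≤ t → z t = exp (t • M) *ᵥ z 0 := by
  set g : ℝ → Fin n → ℝ := fun t => exp ((-t) • M) *ᵥ z t with hg_def
  have hg : ∀ t : ℝ, 0 ≤ t → HasDerivAt g 0 t := by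
    intro t ht
    rw [hasDerivAt_pi]
    intro i
    have hcomp : ∀ j, HasDerivAt (fun u : ℝ => exp ((-u) • M) i j)
        (-((exp ((-t) • M) * M) i j)) t := by
      intro j
      have h1 := (hasDerivAt_exp_smul_entry M (-t) i j).comp t (hasDerivAt_neg t)
      simpa [Function.comp_def, neg_smul, mul_comm] using h1
    have hzc : ∀ j, HasDerivAt (fun u => z u j) ((M *ᵥ z t) j) t :=
      hasDerivAt_pi.mp (hz t ht)
    have hsum : HasDerivAt (fun u => ∑ j, exp ((-u) • M) i j * z u j)
        (∑ j, (-((exp ((-t) • M) * M) i j) * z t j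
          + exp ((-t) • M) i j * (M *ᵥ z t) j)) t :=
      HasDerivAt.fun_sum fun j _ => (hcomp j).mul (hzc j)
    have hval : (∑ j, (-((exp ((-t) • M) * M) i j) * z t j
          + exp ((-t) • M) i j * (M *ᵥ z t) j)) = 0 := by
      rw [Finset.sum_add_distrib]
      have e1 : (∑ j, -((exp ((-t) • M) * M) i j) * z t j)
          = -(((exp ((-t) • M) * M) *ᵥ z t) i) := by
        simp [Matrix.mulVec, dotProduct, Finset.sum_neg_distrib, neg_mul]
      have e2 : (∑ j, exp ((-t) • M) i j * (M *ᵥ z t) j)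
          = (exp ((-t) • M) *ᵥ (M *ᵥ z t)) i := by
        simp [Matrix.mulVec, dotProduct]
      rw [e1, e2, Matrix.mulVec_mulVec]
      exact neg_add_cancel _
    have : HasDerivAt (fun u => ∑ j, exp ((-u) • M) i j * z u j) 0 t := hval ▸ hsum
    convert this using 1 <;> rfl
  have hconst : ∀ t : ℝ, 0 ≤ t → g t = g 0 := by
    intro t ht
    have := constant_of_has_deriv_right_zero (f := g) (a := 0) (b := t)
      (fun x hx => ((hg x hx.1).continuousAt.continuousWithinAt))
      (fun x hx => (hg x hx.1).hasDerivWithinAt)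
    exact this t ⟨ht, le_refl t⟩
  intro t ht
  have h1 : exp (t • M) *ᵥ g t = z t := by
    rw [hg_def]
    simp only [Matrix.mulVec_mulVec]
    rw [matexp_inv_mul, Matrix.one_mulVec]
  have h2 : g 0 = z 0 := by
    simp [hg_def, exp_zero, Matrix.one_mulVec]
  rw [← h1, hconst t ht, h2]


lemma tendsto_pow_mul_exp_neg' {c : ℝ} (hc : c < 0) (j : ℕ) :
    Tendsto (fun t : ℝ => t ^ j * Real.exp (c * t)) atTop (nhds 0) := by
  have h1 : Tendsto (fun t : ℝ => (-c) * t) atTop atTop :=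
    Filter.Tendsto.const_mul_atTop (by linarith) tendsto_id
  have h2 := (Real.tendsto_pow_mul_exp_neg_atTop_nhds_zero j).comp h1
  have h3 := h2.const_mul (((-c) ^ j)⁻¹)
  rw [mul_zero] at h3
  apply h3.congr
  intro t
  have hne : ((-c) : ℝ) ^ j ≠ 0 := pow_ne_zero _ (by linarith)
  simp only [Function.comp_apply]
  rw [mul_pow, neg_mul, neg_neg]
  field_simp

lemma complex_decay {n : ℕ} (Mc : Matrix (Fin n) (Fin n) ℂ)
    (h : ∀ μ ∈ spectrum ℂ Mc, μ.re < 0) (w : Fin n → ℂ) :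
    Tendsto (fun t : ℝ => exp (t • Mc) *ᵥ w) atTop (nhds 0) := by
  letI : NormedRing (Matrix (Fin n) (Fin n) ℂ) := Matrix.linftyOpNormedRing
  letI : NormedAlgebra ℝ (Matrix (Fin n) (Fin n) ℂ) := Matrix.linftyOpNormedAlgebra
  letI : NormedAlgebra ℂ (Matrix (Fin n) (Fin n) ℂ) := Matrix.linftyOpNormedAlgebra
  set S : Submodule ℂ (Fin n → ℂ) :=
    { carrier := {v | Tendsto (fun t : ℝ => exp (t • Mc) *ᵥ v) atTop (nhds 0)}
      add_mem' := fun {a b} ha hb => by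
        have := ha.add hb
        rw [add_zero] at this
        refine this.congr fun t => ?_
        rw [Matrix.mulVec_add]
      zero_mem' := by
        simp only [Set.mem_setOf_eq, Matrix.mulVec_zero]
        exact tendsto_const_nhds
      smul_mem' := fun c v hv => by
        have := hv.const_smul c
        rw [smul_zero] at this
        refine this.congr fun t => ?_
        rw [Matrix.mulVec_smul] } with hS
  have key : ∀ μ : ℂ, Module.End.maxGenEigenspace (Matrix.toLinAlgEquiv' Mc) μ ≤ S := by
    intro μ v hv
    rw [Module.End.mem_maxGenEigenspace] at hv
    obtain ⟨k, hk⟩ := hv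
    by_cases hv0 : v = 0
    · rw [hv0]; exact S.zero_mem
    have hk0 : k ≠ 0 := by
      rintro rfl
      rw [pow_zero, Module.End.one_apply] at hk
      exact hv0 hk
    have hev : Module.End.HasEigenvalue (Matrix.toLinAlgEquiv' Mc) μ := by
      apply Module.End.hasEigenvalue_of_hasGenEigenvalue (k := k)
      rw [Module.End.hasGenEigenvalue_iff]
      intro hbot
      have hvmem : v ∈ Module.End.genEigenspace (Matrix.toLinAlgEquiv' Mc) μ k :=
        Module.End.mem_genEigenspace_nat.mpr hk
      rw [hbot] at hvmem
      exact hv0 ((Submodule.mem_bot ℂ).mp hvmem)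
    have hμre : μ.re < 0 := by
      apply h
      have := hev.mem_spectrum
      rwa [show spectrum ℂ (Matrix.toLinAlgEquiv' Mc) = spectrum ℂ Mc from
        AlgEquiv.spectrum_eq (Matrix.toLinAlgEquiv' (R := ℂ) (n := Fin n)) Mc] at this
    set N : Matrix (Fin n) (Fin n) ℂ := Mc - μ • 1 with hN
    have hNkv : N ^ k *ᵥ v = 0 := by
      have hμ1 : Matrix.toLinAlgEquiv' (μ • (1 : Matrix (Fin n) (Fin n) ℂ)) = μ • 1 := by
        rw [_root_.map_smul, _root_.map_one]
      have h1 : Matrix.toLinAlgEquiv' (N ^ k) =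
          (Matrix.toLinAlgEquiv' Mc - μ • 1) ^ k := by
        rw [map_pow, map_sub, hμ1]
      have h2 : Matrix.toLinAlgEquiv' (N ^ k) v = 0 := by rw [h1]; exact hk
      rwa [Matrix.toLinAlgEquiv'_apply] at h2
    have hNj : ∀ j, k ≤ j → N ^ j *ᵥ v = 0 := by
      intro j hj
      rw [← Nat.sub_add_cancel hj, pow_add, ← Matrix.mulVec_mulVec, hNkv,
        Matrix.mulVec_zero]
    have hsplit : ∀ t : ℝ, exp (t • Mc) = Complex.exp (t * μ) • exp (t • N) := by
      intro t
      have hMc : t • Mc = t • (μ • (1 : Matrix (Fin n) (Fin n) ℂ)) + t • N := by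
        rw [← smul_add]
        congr 1
        rw [hN]
        abel
      have hcomm : Commute (t • (μ • (1 : Matrix (Fin n) (Fin n) ℂ))) (t • N) :=
        (((Commute.one_left N).smul_left μ).smul_left t).smul_right t
      rw [hMc, Matrix.exp_add_of_commute _ _ hcomm]
      have h1 : t • (μ • (1 : Matrix (Fin n) (Fin n) ℂ))
          = algebraMap ℂ (Matrix (Fin n) (Fin n) ℂ) ((t : ℂ) * μ) := by
        rw [← smul_assoc, Algebra.algebraMap_eq_smul_one]
        congr 1
      have h2 : exp (algebraMap ℂ (Matrix (Fin n) (Fin n) ℂ) ((t : ℂ) * μ))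
          = algebraMap ℂ (Matrix (Fin n) (Fin n) ℂ) (Complex.exp ((t : ℂ) * μ)) := by
        erw [← map_exp (algebraMap ℂ (Matrix (Fin n) (Fin n) ℂ))
          (continuous_algebraMap _ _)]
        congr 1
        rw [Complex.exp_eq_exp_ℂ]
      rw [h1, h2, ← Algebra.smul_def]
    have hexpN : ∀ t : ℝ, exp (t • N) *ᵥ v
        = ∑ j ∈ Finset.range k, ((j.factorial : ℝ)⁻¹ * t ^ j) • (N ^ j *ᵥ v) := by
      intro t
      let L : Matrix (Fin n) (Fin n) ℂ →ₗ[ℝ] (Fin n → ℂ) :=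
        { toFun := fun X => X *ᵥ v
          map_add' := fun X Y => Matrix.add_mulVec X Y v
          map_smul' := fun c X => Matrix.smul_mulVec c X v }
      let Lc := LinearMap.toContinuousLinearMap L
      have hsummable : Summable (fun j : ℕ => (j.factorial : ℝ)⁻¹ • (t • N) ^ j) :=
        expSeries_summable' (𝕂 := ℝ) (t • N)
      have hLc : ∀ X : Matrix (Fin n) (Fin n) ℂ, Lc X = X *ᵥ v := fun X => rfl
      calc exp (t • N) *ᵥ v
          = Lc (∑' j : ℕ, (j.factorial : ℝ)⁻¹ • (t • N) ^ j) := by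
            rw [exp_eq_tsum ℝ]; exact (hLc _).symm
        _ = ∑' j : ℕ, Lc ((j.factorial : ℝ)⁻¹ • (t • N) ^ j) :=
            Lc.map_tsum hsummable
        _ = ∑' j : ℕ, ((j.factorial : ℝ)⁻¹ * t ^ j) • (N ^ j *ᵥ v) := by
            congr 1
            funext j
            rw [_root_.map_smul, hLc, smul_pow, Matrix.smul_mulVec, smul_smul]
        _ = ∑ j ∈ Finset.range k, ((j.factorial : ℝ)⁻¹ * t ^ j) • (N ^ j *ᵥ v) := by
            apply tsum_eq_sum
            intro j hj
            rw [hNj j (le_of_not_gt (Finset.mem_range.not.mp hj ∘ id)), smul_zero]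
    show Tendsto (fun t : ℝ => exp (t • Mc) *ᵥ v) atTop (nhds 0)
    have heq : ∀ t : ℝ, exp (t • Mc) *ᵥ v
        = ∑ j ∈ Finset.range k,
            (Complex.exp (t * μ) * (Complex.ofReal ((j.factorial : ℝ)⁻¹ * t ^ j))) • (N ^ j *ᵥ v) := by
      intro t
      rw [hsplit t, Matrix.smul_mulVec, hexpN t, Finset.smul_sum]
      refine Finset.sum_congr rfl fun j _ => ?_
      rw [← algebraMap_smul ℂ ((j.factorial : ℝ)⁻¹ * t ^ j) (N ^ j *ᵥ v), smul_smul]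
      norm_cast
    rw [show (fun t : ℝ => exp (t • Mc) *ᵥ v) = fun t : ℝ => ∑ j ∈ Finset.range k,
        (Complex.exp (t * μ) * (Complex.ofReal ((j.factorial : ℝ)⁻¹ * t ^ j))) • (N ^ j *ᵥ v)
      from funext heq]
    have : (0 : Fin n → ℂ) = ∑ j ∈ Finset.range k, (0 : Fin n → ℂ) := by simp
    rw [this]
    refine tendsto_finset_sum _ fun j _ => ?_
    have hscal : Tendsto (fun t : ℝ =>
        Complex.exp (t * μ) * (Complex.ofReal ((j.factorial : ℝ)⁻¹ * t ^ j))) atTop (nhds 0) := by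
      apply squeeze_zero_norm' (a := fun t => (j.factorial : ℝ)⁻¹ * (t ^ j * Real.exp (μ.re * t)))
      · filter_upwards [eventually_ge_atTop (0 : ℝ)] with t ht
        rw [norm_mul, Complex.norm_exp]
        have hre : ((t : ℂ) * μ).re = t * μ.re := by
          simp [Complex.mul_re]
        rw [hre, Complex.norm_real, Real.norm_eq_abs, abs_mul, abs_pow, abs_of_nonneg ht,
          abs_of_nonneg (by positivity : (0:ℝ) ≤ (j.factorial : ℝ)⁻¹)]
        rw [mul_comm (Real.exp (t * μ.re)) _, mul_assoc, mul_comm t μ.re]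
      · have := (tendsto_pow_mul_exp_neg' hμre j).const_mul ((j.factorial : ℝ)⁻¹)
        rwa [mul_zero] at this
    have := hscal.smul_const (N ^ j *ᵥ v)
    rwa [zero_smul] at this
  have htop := Module.End.iSup_maxGenEigenspace_eq_top (Matrix.toLinAlgEquiv' Mc)
  have hle : (⊤ : Submodule ℂ (Fin n → ℂ)) ≤ S := htop ▸ iSup_le key
  exact hle trivial


lemma real_decay {n : ℕ} (M : Matrix (Fin n) (Fin n) ℝ) (hM : IsHurwitz M) (v : Fin n → ℝ) :
    Tendsto (fun t : ℝ => exp (t • M) *ᵥ v) atTop (nhds 0) := by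
  letI : NormedRing (Matrix (Fin n) (Fin n) ℝ) := Matrix.linftyOpNormedRing
  letI : NormedAlgebra ℝ (Matrix (Fin n) (Fin n) ℝ) := Matrix.linftyOpNormedAlgebra
  letI : NormedRing (Matrix (Fin n) (Fin n) ℂ) := Matrix.linftyOpNormedRing
  letI : NormedAlgebra ℝ (Matrix (Fin n) (Fin n) ℂ) := Matrix.linftyOpNormedAlgebra
  have hc := complex_decay (M.map (algebraMap ℝ ℂ)) hM (fun i => ((v i : ℝ) : ℂ))
  have hmapexp : ∀ t : ℝ, (exp (t • M)).map (algebraMap ℝ ℂ)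
      = exp (t • M.map (algebraMap ℝ ℂ)) := by
    intro t
    have hcont : Continuous ((algebraMap ℝ ℂ).mapMatrix :
        Matrix (Fin n) (Fin n) ℝ →+* Matrix (Fin n) (Fin n) ℂ) := by
      show Continuous fun A : Matrix (Fin n) (Fin n) ℝ => A.map (algebraMap ℝ ℂ)
      exact Continuous.matrix_map continuous_id (continuous_algebraMap ℝ ℂ)
    letI : NormedAlgebra ℚ (Matrix (Fin n) (Fin n) ℝ) := .restrictScalars ℚ ℝ _
    letI : NormedAlgebra ℚ (Matrix (Fin n) (Fin n) ℂ) := .restrictScalars ℚ ℝ _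
    have := map_exp ((algebraMap ℝ ℂ).mapMatrix :
        Matrix (Fin n) (Fin n) ℝ →+* Matrix (Fin n) (Fin n) ℂ) hcont (t • M)
    rw [RingHom.mapMatrix_apply, RingHom.mapMatrix_apply] at this
    erw [this]
    congr 1
    ext i j
    simp [Matrix.map_apply, Complex.real_smul]
  have hcomp : ∀ t : ℝ, ∀ i, ((exp (t • M) *ᵥ v) i : ℂ)
      = (exp (t • M.map (algebraMap ℝ ℂ)) *ᵥ fun j => ((v j : ℝ) : ℂ)) i := by
    intro t i
    have := RingHom.map_mulVec (algebraMap ℝ ℂ) (exp (t • M)) v i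
    rw [hmapexp t] at this
    exact this
  rw [tendsto_pi_nhds]
  intro i
  have h1 : Tendsto (fun t : ℝ =>
      (exp (t • M.map (algebraMap ℝ ℂ)) *ᵥ fun j => ((v j : ℝ) : ℂ)) i) atTop (nhds 0) :=
    (tendsto_pi_nhds.mp hc) i
  have h2 := (Complex.continuous_re.tendsto 0).comp h1
  simp only [Complex.zero_re] at h2
  apply h2.congr
  intro t
  simp only [Function.comp_apply]
  rw [← hcomp t i, Complex.ofReal_re]

end Aux

/-- state-feedback regulation part of Lemma 1.
If `(Π, Γ)` solve the regulator equations, `A + B F` is Hurwitz, and `x₁, x₂` solve the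
closed-loop system with `u = F (x₁ − Π x₂) + Γ x₂`, then the regulation error
`e = D x₁ + E x₂` tends to `0` as `t → ∞`. -/
theorem state_feedback_output_regulation
    (n m q p : ℕ)
    (A : Matrix (Fin n) (Fin n) ℝ) (B : Matrix (Fin n) (Fin m) ℝ)
    (A₁₂ : Matrix (Fin n) (Fin q) ℝ) (A₂₂ : Matrix (Fin q) (Fin q) ℝ)
    (D : Matrix (Fin p) (Fin n) ℝ) (E : Matrix (Fin p) (Fin q) ℝ)
    (Pi' : Matrix (Fin n) (Fin q) ℝ) (Ga' : Matrix (Fin m) (Fin q) ℝ)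
    (hreg1 : Pi' * A₂₂ = A * Pi' + A₁₂ + B * Ga')
    (hreg2 : (0 : Matrix (Fin p) (Fin q) ℝ) = D * Pi' + E)
    (F : Matrix (Fin m) (Fin n) ℝ) (hF : IsHurwitz (A + B * F))
    (x₁ : ℝ → Fin n → ℝ) (x₂ : ℝ → Fin q → ℝ)
    (u : ℝ → Fin m → ℝ)
    (hu : ∀ t : ℝ, u t = F *ᵥ (x₁ t - Pi' *ᵥ x₂ t) + Ga' *ᵥ x₂ t)
    (hx₂ : ∀ t : ℝ, 0 ≤ t → HasDerivAt x₂ (A₂₂ *ᵥ x₂ t) t)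
    (hx₁ : ∀ t : ℝ, 0 ≤ t →
      HasDerivAt x₁ (A *ᵥ x₁ t + A₁₂ *ᵥ x₂ t + B *ᵥ u t) t) :
    Tendsto (fun t => D *ᵥ x₁ t + E *ᵥ x₂ t) atTop (nhds 0) := by
  set M := A + B * F with hM
  set z : ℝ → Fin n → ℝ := fun t => x₁ t - Pi' *ᵥ x₂ t with hz_def
  have hz : ∀ t : ℝ, 0 ≤ t → HasDerivAt z (M *ᵥ z t) t := by
    intro t ht
    have h2 : HasDerivAt (fun s => Pi' *ᵥ x₂ s) (Pi' *ᵥ (A₂₂ *ᵥ x₂ t)) t := by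
      have hL := ((Matrix.mulVecLin Pi').toContinuousLinearMap.hasFDerivAt
        (x := x₂ t)).comp_hasDerivAt t (hx₂ t ht)
      exact hL
    have h1 := (hx₁ t ht).sub h2
    refine h1.congr_deriv (Eq.symm ?_)
    rw [hu t]
    have hPA : Pi' *ᵥ (A₂₂ *ᵥ x₂ t) = (A * Pi' + A₁₂ + B * Ga') *ᵥ x₂ t := by
      rw [Matrix.mulVec_mulVec, hreg1]
    rw [hPA, hM]
    show (A + B * F) *ᵥ (x₁ t - Pi' *ᵥ x₂ t) = _
    simp only [Matrix.add_mulVec, Matrix.mulVec_sub, Matrix.mulVec_add,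
      ← Matrix.mulVec_mulVec]
    abel
  have hztend : Tendsto z atTop (nhds 0) := by
    apply (real_decay M hF (z 0)).congr'
    filter_upwards [eventually_ge_atTop (0 : ℝ)] with t ht
    exact (ode_solution M z hz t ht).symm
  have hDz : Tendsto (fun t => D *ᵥ z t) atTop (nhds 0) := by
    have hL := (((Matrix.mulVecLin D).toContinuousLinearMap.continuous.tendsto 0).comp hztend)
    simpa [Function.comp_def] using hL
  apply hDz.congr
  intro t
  have hDP : D * Pi' = -E := eq_neg_of_add_eq_zero_left hreg2.symm
  show D *ᵥ (x₁ t - Pi' *ᵥ x₂ t) = _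
  rw [Matrix.mulVec_sub, Matrix.mulVec_mulVec, hDP, Matrix.neg_mulVec, sub_neg_eq_add]
end

section
/- Let n ≥ 1 and let a_{ij} ≥ 0 for i = 1,…,n and j = 0,1,…,n with a_{ii} = 0, and let L ∈ ℝ^{n×n} be the associated grounded Laplacian. Consider the directed leader–follower graph on nodes {0,1,…,n} with an edge from j to i (i ∈ {1,…,n}) whenever a_{ij} > 0. If every node i ∈ {1,…,n} is reachable from node 0 by a finite directed path (i.e. the graph contains a directed spanning tree rooted at the leader node 0), then every complex eigenvalue λ of L satisfies Re λ > 0; equivalently, −L is Hurwitz. -/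
open Matrix

/-- The grounded (leader–follower) Laplacian associated with nonnegative weights
`a i j` (`i ∈ {1,…,n}` indexed by `Fin n`, `j ∈ {0,1,…,n}` indexed by `Fin (n+1)`,
follower `i` corresponding to node `i.succ`):
`L i i = ∑_{j=0}^n a i j` and `L i j = − a i j.succ` for `i ≠ j`. -/
def groundedLaplacian (n : ℕ) (a : Fin n → Fin (n + 1) → ℝ) :
    Matrix (Fin n) (Fin n) ℝ :=
  fun i j => if i = j then ∑ k, a i k else -(a i j.succ)

/-- second part of Lemma 2.
If in the leader–follower graph on nodes `{0,1,…,n}` (with an edge from `j` to `i`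
whenever `a_{ij} > 0`) every follower node is reachable from the leader node `0` by a
directed path, then every complex eigenvalue of the grounded Laplacian has positive
real part; equivalently, `−L` is Hurwitz. -/
theorem groundedLaplacian_spanning_tree_spectrum_open_right_half_plane
    (n : ℕ) (hn : 1 ≤ n) (a : Fin n → Fin (n + 1) → ℝ)
    (ha : ∀ i j, 0 ≤ a i j) (haii : ∀ i : Fin n, a i i.succ = 0)
    (hreach : ∀ i : Fin n,
      Relation.ReflTransGen
        (fun jnode inode : Fin (n + 1) =>
          ∃ i' : Fin n, inode = i'.succ ∧ 0 < a i' jnode)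
        0 i.succ) :
    (∀ μ ∈ spectrum ℂ ((groundedLaplacian n a).map (algebraMap ℝ ℂ)), 0 < μ.re) ∧
      IsHurwitz (-(groundedLaplacian n a)) := by
  have main : ∀ μ ∈ spectrum ℂ ((groundedLaplacian n a).map (algebraMap ℝ ℂ)), 0 < μ.re := by
    intro μ hμ
    by_contra hcon
    push_neg at hcon
    -- extract eigenvector
    rw [spectrum.mem_iff] at hμ
    have hdet : (algebraMap ℂ (Matrix (Fin n) (Fin n) ℂ) μ
        - (groundedLaplacian n a).map (algebraMap ℝ ℂ)).det = 0 := by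
      by_contra hd
      exact hμ ((Matrix.isUnit_iff_isUnit_det _).mpr (Ne.isUnit hd))
    obtain ⟨v, hv0, hv⟩ := (Matrix.exists_mulVec_eq_zero_iff).mpr hdet
    have hev : ((groundedLaplacian n a).map (algebraMap ℝ ℂ)).mulVec v = μ • v := by
      rw [Matrix.sub_mulVec, Algebra.algebraMap_eq_smul_one, Matrix.smul_mulVec,
        Matrix.one_mulVec] at hv
      exact (sub_eq_zero.mp hv).symm
    have hrow : ∀ i, ∑ j, ((groundedLaplacian n a i j : ℝ) : ℂ) * v j = μ * v i := by
      intro i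
      have := congrFun hev i
      simpa [Matrix.mulVec, dotProduct, Matrix.map_apply, Pi.smul_apply, smul_eq_mul] using this
    -- argmax index
    obtain ⟨i₀, -, hmax⟩ := Finset.exists_max_image Finset.univ (fun i => ‖v i‖)
      ⟨⟨0, hn⟩, Finset.mem_univ _⟩
    have hmax' : ∀ j, ‖v j‖ ≤ ‖v i₀‖ := fun j => hmax j (Finset.mem_univ j)
    have hM0 : 0 < ‖v i₀‖ := by
      obtain ⟨j, hj⟩ := Function.ne_iff.mp hv0
      exact lt_of_lt_of_le (norm_pos_iff.mpr hj) (hmax' j)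
    -- key structural lemma for maximizing indices
    have keyA : ∀ i : Fin n, ‖v i‖ = ‖v i₀‖ →
        a i 0 = 0 ∧ ∀ j, 0 < a i j.succ → ‖v j‖ = ‖v i₀‖ := by
      intro i hi
      have hL : ∀ j, ((groundedLaplacian n a i j : ℝ) : ℂ)
          = (if i = j then ((∑ k, a i k : ℝ) : ℂ) else 0) - (a i j.succ : ℂ) := by
        intro j
        by_cases h : i = j
        · subst h; simp [groundedLaplacian, haii i]
        · simp [groundedLaplacian, h]
      have hkey : ((∑ k, a i k : ℝ) - μ : ℂ) * v i = ∑ j : Fin n, (a i j.succ : ℂ) * v j := by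
        calc ((∑ k, a i k : ℝ) - μ : ℂ) * v i
            = ((∑ k, a i k : ℝ) : ℂ) * v i - μ * v i := by ring
          _ = ((∑ k, a i k : ℝ) : ℂ) * v i
              - ∑ j, ((groundedLaplacian n a i j : ℝ) : ℂ) * v j := by rw [hrow i]
          _ = ∑ j : Fin n, (a i j.succ : ℂ) * v j := by
              simp only [hL, sub_mul, Finset.sum_sub_distrib, ite_mul, zero_mul,
                Finset.sum_ite_eq, Finset.mem_univ, if_true]
              ring
      set d : ℝ := ∑ k, a i k with hd
      have hdnn : 0 ≤ d := Finset.sum_nonneg fun k _ => ha i k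
      have hdle : d ≤ ‖((d : ℝ) : ℂ) - μ‖ := by
        have h1 : (((d : ℝ) : ℂ) - μ).re ≤ ‖((d : ℝ) : ℂ) - μ‖ :=
          Complex.re_le_norm _
      -- re = d - μ.re ≥ d
        have : (((d : ℝ) : ℂ) - μ).re = d - μ.re := by simp
        linarith [this ▸ h1]
      have hnorm1 : ‖((d : ℝ) : ℂ) - μ‖ * ‖v i₀‖ ≤ ∑ j : Fin n, a i j.succ * ‖v j‖ := by
        have e1 : ‖((d : ℝ) : ℂ) - μ‖ * ‖v i₀‖ = ‖∑ j : Fin n, (a i j.succ : ℂ) * v j‖ := by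
          rw [← hi, ← norm_mul, hkey]
        rw [e1]
        refine (norm_sum_le _ _).trans_eq ?_
        refine Finset.sum_congr rfl fun j _ => ?_
        rw [norm_mul, Complex.norm_real, Real.norm_eq_abs, abs_of_nonneg (ha i j.succ)]
      have hsplit : d = a i 0 + ∑ j : Fin n, a i j.succ := Fin.sum_univ_succ (a i)
      have hnorm2 : ∑ j : Fin n, a i j.succ * ‖v j‖ ≤ (∑ j : Fin n, a i j.succ) * ‖v i₀‖ := by
        rw [Finset.sum_mul]
        exact Finset.sum_le_sum fun j _ =>
          mul_le_mul_of_nonneg_left (hmax' j) (ha i j.succ)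
      have chain : d * ‖v i₀‖ ≤ (d - a i 0) * ‖v i₀‖ := by
        have h2 : d * ‖v i₀‖ ≤ ‖((d : ℝ) : ℂ) - μ‖ * ‖v i₀‖ :=
          mul_le_mul_of_nonneg_right hdle (le_of_lt hM0)
        have h3 : (∑ j : Fin n, a i j.succ) = d - a i 0 := by linarith [hsplit]
        calc d * ‖v i₀‖ ≤ ‖((d : ℝ) : ℂ) - μ‖ * ‖v i₀‖ := h2
          _ ≤ ∑ j : Fin n, a i j.succ * ‖v j‖ := hnorm1
          _ ≤ (∑ j : Fin n, a i j.succ) * ‖v i₀‖ := hnorm2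
          _ = (d - a i 0) * ‖v i₀‖ := by rw [h3]
      have ha0 : a i 0 = 0 := by
        have := ha i 0
        nlinarith [hM0]
      have heq : ∑ j : Fin n, a i j.succ * (‖v i₀‖ - ‖v j‖) = 0 := by
        have expand : ∑ j : Fin n, a i j.succ * (‖v i₀‖ - ‖v j‖)
            = (∑ j : Fin n, a i j.succ) * ‖v i₀‖ - ∑ j : Fin n, a i j.succ * ‖v j‖ := by
          rw [Finset.sum_mul, ← Finset.sum_sub_distrib]
          exact Finset.sum_congr rfl fun j _ => by ring
        have h3 : (∑ j : Fin n, a i j.succ) = d := by linarith [hsplit]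
        have hge : d * ‖v i₀‖ ≤ ∑ j : Fin n, a i j.succ * ‖v j‖ := by
          calc d * ‖v i₀‖ ≤ ‖((d : ℝ) : ℂ) - μ‖ * ‖v i₀‖ :=
            mul_le_mul_of_nonneg_right hdle (le_of_lt hM0)
          _ ≤ ∑ j : Fin n, a i j.succ * ‖v j‖ := hnorm1
        rw [expand, h3]
        nlinarith [hnorm2, h3]
      refine ⟨ha0, fun j hj => ?_⟩
      have hterm := (Finset.sum_eq_zero_iff_of_nonneg
        (fun j _ => mul_nonneg (ha i j.succ) (sub_nonneg.mpr (hmax' j)))).mp heq j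
        (Finset.mem_univ j)
      have : ‖v i₀‖ - ‖v j‖ = 0 := by
        rcases mul_eq_zero.mp hterm with h | h
        · exact absurd h (ne_of_gt hj)
        · exact h
      linarith
    -- reachability induction: maximizing indices unreachable from 0
    have keyB : ∀ w : Fin (n + 1),
        Relation.ReflTransGen
          (fun jnode inode : Fin (n + 1) =>
            ∃ i' : Fin n, inode = i'.succ ∧ 0 < a i' jnode) 0 w →
        ∀ i' : Fin n, w = i'.succ → ¬ (‖v i'‖ = ‖v i₀‖) := by
      intro w hw
      induction hw with
      | refl => intro i' h; exact absurd h.symm (Fin.succ_ne_zero i')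
      | tail hstep st ih =>
        rename_i b c
        intro i' hc hSi
        obtain ⟨i2, hce, hpos⟩ := st
        have hi2 : i' = i2 := Fin.succ_injective _ (hc.symm.trans hce)
        subst hi2
        obtain ⟨ha0, hclose⟩ := keyA i' hSi
        rcases Fin.eq_zero_or_eq_succ b with hb | ⟨j, hb⟩
        · rw [hb, ha0] at hpos
          exact lt_irrefl 0 hpos
        · exact ih j hb (hclose j (hb ▸ hpos))
    have := keyB i₀.succ (hreach i₀) i₀ rfl
    exact this rfl
  refine ⟨main, ?_⟩
  intro μ hμ
  have hmapneg : ((-(groundedLaplacian n a)).map (algebraMap ℝ ℂ))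
      = -((groundedLaplacian n a).map (algebraMap ℝ ℂ)) := by
    ext i j; simp [Matrix.map_apply]
  have hneg : -μ ∈ spectrum ℂ ((groundedLaplacian n a).map (algebraMap ℝ ℂ)) := by
    rw [spectrum.mem_iff] at hμ ⊢
    intro h
    apply hμ
    rw [hmapneg]
    have h2 := h.neg
    convert h2 using 1
    rw [map_neg]
    abel
  have := main (-μ) hneg
  simp only [Complex.neg_re] at this
  linarith
end

section
/- Let A ∈ ℝ^{N×N}, C ∈ ℝ^{p×N}, and let n̄ ≥ N be an integer. Set T = [C; CA; …; CA^{n̄−1}] ∈ ℝ^{pn̄×N}, let 𝒜 = [[0, I_{p(n̄−1)}],[0, 0]] ∈ ℝ^{pn̄×pn̄} be the block upper shift matrix and 𝒞 = [I_p, 0] ∈ ℝ^{p×pn̄}. Then there exists a matrix L ∈ ℝ^{p×pn̄} such that, writing ℒ ∈ ℝ^{pn̄×pn̄} for the matrix whose last p rows equal L and whose other rows are zero, one has T A = (𝒜 + ℒ) T and C = 𝒞 T. -/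
open Matrix

/-- The stacked (extended) observability matrix `[C; CA; …; CA^{nbar−1}]` with `nbar` blocks. -/
def obsMatrix {α ι : Type*} [Fintype α] [DecidableEq α]
    (nbar : ℕ) (A : Matrix α α ℝ) (C : Matrix ι α ℝ) :
    Matrix (Fin nbar × ι) α ℝ :=
  fun kr j => (C * A ^ (kr.1 : ℕ)) kr.2 j

/-- The block upper shift matrix `𝒜 = [[0, I_{p(nbar−1)}],[0,0]]` on `nbar` blocks of size `p`. -/
def shiftMat (nbar p : ℕ) : Matrix (Fin nbar × Fin p) (Fin nbar × Fin p) ℝ :=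
  fun kr lj => if (lj.1 : ℕ) = (kr.1 : ℕ) + 1 ∧ kr.2 = lj.2 then 1 else 0

/-- The block output matrix `𝒞 = [I_p, 0]`. -/
def outMat (nbar p : ℕ) : Matrix (Fin p) (Fin nbar × Fin p) ℝ :=
  fun i kj => if (kj.1 : ℕ) = 0 ∧ kj.2 = i then 1 else 0

/-- The matrix whose last `p` rows (block row `nbar − 1`) equal `L` and whose other rows
are zero. -/
def lastRows (nbar p : ℕ) {c : Type*} (L : Matrix (Fin p) c ℝ) :
    Matrix (Fin nbar × Fin p) c ℝ :=
  fun kr j => if (kr.1 : ℕ) = nbar - 1 then L kr.2 j else 0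

/-- intertwining identity of the pseudo-identical transformation.
For `nbar ≥ N` and `T = [C; CA; …; CA^{nbar−1}]` there is `L ∈ ℝ^{p×p·nbar}` such that
`T A = (𝒜 + ℒ) T` (with `ℒ` the matrix whose last `p` rows are `L` and zero elsewhere)
and `C = 𝒞 T`. -/
theorem pseudo_identical_intertwining
    (N p nbar : ℕ) (hnbar : N ≤ nbar)
    (A : Matrix (Fin N) (Fin N) ℝ) (C : Matrix (Fin p) (Fin N) ℝ) :
    ∃ L : Matrix (Fin p) (Fin nbar × Fin p) ℝ,
      obsMatrix nbar A C * A = (shiftMat nbar p + lastRows nbar p L) * obsMatrix nbar A C ∧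
        C = outMat nbar p * obsMatrix nbar A C := by
  rcases Nat.eq_zero_or_pos nbar with h0 | hpos
  · subst h0
    refine ⟨0, ?_, ?_⟩
    · ext ⟨k, i⟩ j; exact k.elim0
    · ext i j; have := j.isLt; omega
  set r : Polynomial ℝ := Polynomial.X ^ nbar %ₘ A.charpoly with hr
  have hmonic := A.charpoly_monic
  have h2 : Polynomial.aeval A r = A ^ nbar := by
    conv_rhs => rw [show A ^ nbar = Polynomial.aeval A ((Polynomial.X : Polynomial ℝ) ^ nbar) by
        simp, ← Polynomial.modByMonic_add_div ((Polynomial.X : Polynomial ℝ) ^ nbar) A.charpoly]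
    simp [Matrix.aeval_self_charpoly, hr]
  have hdeg : r.natDegree < nbar := by
    rcases eq_or_ne r 0 with h0|h0
    · simpa [h0] using hpos
    · rw [Polynomial.natDegree_lt_iff_degree_lt h0]
      calc r.degree < A.charpoly.degree := Polynomial.degree_modByMonic_lt _ hmonic
        _ = (N : WithBot ℕ) := by rw [Matrix.charpoly_degree_eq_dim]; simp
        _ ≤ (nbar : WithBot ℕ) := by exact_mod_cast hnbar
  have hAnbar : A ^ nbar = ∑ l ∈ Finset.range nbar, r.coeff l • A ^ l := by
    rw [← h2, Polynomial.aeval_eq_sum_range' hdeg]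
  refine ⟨fun i kj => if kj.2 = i then r.coeff kj.1 else 0, ?_, ?_⟩
  · ext ⟨k, i⟩ j
    rw [Matrix.mul_apply, Matrix.mul_apply]
    by_cases hk : (k : ℕ) = nbar - 1
    · have hk1 : (k : ℕ) + 1 = nbar := by omega
      have hlhs : ∑ x, obsMatrix nbar A C (k, i) x * A x j
          = (C * A ^ nbar) i j := by
        conv_rhs => rw [← hk1]
        rw [pow_succ, ← Matrix.mul_assoc, Matrix.mul_apply]
        rfl
      rw [hlhs]
      have hrhs : ∀ lm : Fin nbar × Fin p,
          (shiftMat nbar p + lastRows nbar p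
            (fun i (kj : Fin nbar × Fin p) => if kj.2 = i then r.coeff kj.1 else 0)) (k, i) lm
            * obsMatrix nbar A C lm j
          = (if lm.2 = i then r.coeff lm.1 else 0) * (C * A ^ (lm.1 : ℕ)) lm.2 j := by
        rintro ⟨l, m⟩
        have : ¬ ((l : ℕ) = nbar - 1 + 1 ∧ i = m) := by
          rintro ⟨hl, -⟩; have := l.isLt; omega
        simp [shiftMat, lastRows, obsMatrix, this, hk, ite_mul]
      rw [Finset.sum_congr rfl fun lm _ => hrhs lm]
      rw [Fintype.sum_prod_type]
      have : ∀ l : Fin nbar, ∑ m : Fin p,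
          (if m = i then r.coeff l else 0) * (C * A ^ (l : ℕ)) m j
          = r.coeff l * (C * A ^ (l : ℕ)) i j := by
        intro l
        rw [Finset.sum_eq_single i] <;> simp +contextual
      rw [Finset.sum_congr rfl fun l _ => this l]
      have hCA : (C * A ^ nbar) i j
          = ∑ l ∈ Finset.range nbar, r.coeff l * (C * A ^ l) i j := by
        rw [hAnbar, Matrix.mul_sum, Matrix.sum_apply]
        simp [Matrix.mul_smul]
      rw [hCA, ← Fin.sum_univ_eq_sum_range (fun l => r.coeff l * (C * A ^ l) i j) nbar]
    · have hk1 : (k : ℕ) + 1 < nbar := by have := k.isLt; omega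
      have hlhs : ∑ x, obsMatrix nbar A C (k, i) x * A x j
          = (C * A ^ ((k : ℕ) + 1)) i j := by
        rw [pow_succ, ← Matrix.mul_assoc, Matrix.mul_apply]
        rfl
      rw [hlhs, Finset.sum_eq_single (⟨(k : ℕ) + 1, hk1⟩, i)]
      · simp [shiftMat, lastRows, obsMatrix, hk]
      · rintro ⟨l, m⟩ - hne
        have : ¬ ((l : ℕ) = (k : ℕ) + 1 ∧ i = m) := by
          rintro ⟨hl, hm⟩
          exact hne (by subst hm; exact Prod.ext (Fin.ext hl) rfl)
        simp [shiftMat, lastRows, this, hk]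
      · simp
  · ext i j
    rw [Matrix.mul_apply, Finset.sum_eq_single ((⟨0, hpos⟩ : Fin nbar), i)]
    · simp [outMat, obsMatrix]
    · rintro ⟨l, m⟩ - hne
      have : ¬ ((l : ℕ) = 0 ∧ m = i) := by
        rintro ⟨hl, hm⟩
        exact hne (by subst hm; exact Prod.ext (Fin.ext hl) rfl)
      simp [outMat, this]
    · simp
end

section
/- Let M ∈ ℝ^{N×N} be a matrix such that every complex eigenvalue of M has nonpositive real part and every eigenvalue λ of M with Re λ = 0 is semisimple, i.e. ker((M − λI)²) = ker(M − λI) over ℂ. Then there exists a symmetric positive definite matrix P ∈ ℝ^{N×N} such that P M + Mᵀ P is negative semidefinite, i.e. xᵀ(P M + Mᵀ P)x ≤ 0 for all x ∈ ℝ^N. -/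
open Matrix Module Submodule Set Module.End


variable {K : Type*} [Field K]

lemma nil_tri_aux (n : ℕ) :
    ∀ (V : Type) (_ : AddCommGroup V) (_ : Module K V) (_ : FiniteDimensional K V),
      finrank K V = n → ∀ g : Module.End K V, IsNilpotent g →
      ∃ b : Basis (Fin n) K V, ∀ j, g (b j) ∈ span K (b '' {i | j < i}) := by
  induction n with
  | zero =>
    intro V _ _ _ hn g _
    have : Subsingleton V := (Module.finrank_zero_iff).mp hn
    exact ⟨Basis.empty V, fun j => j.elim0⟩
  | succ n ih =>
    intro V _ _ _ hn g hg
    have hV : Nontrivial V := Module.nontrivial_of_finrank_pos (by omega : 0 < finrank K V)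
    -- range g ≠ ⊤
    obtain ⟨k, hk⟩ := hg
    have hrange : LinearMap.range g < ⊤ := by
      rcases lt_or_eq_of_le (le_top : LinearMap.range g ≤ ⊤) with h | h
      · exact h
      · exfalso
        have hsurj : Function.Surjective g := LinearMap.range_eq_top.mp h
        have hsurjk : ∀ m, Function.Surjective ⇑(g ^ m) := by
          intro m
          induction m with
          | zero => simp only [pow_zero, Module.End.one_eq_id]; exact Function.surjective_id
          | succ m ihm => rw [pow_succ']; exact hsurj.comp ihm
        obtain ⟨x, hx⟩ := exists_ne (0 : V)
        obtain ⟨y, hy⟩ := hsurjk k x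
        rw [hk] at hy
        exact hx (by simpa using hy.symm)
    obtain ⟨φ, hφ, hφ2⟩ := (LinearMap.range g).exists_dual_map_eq_bot_of_lt_top hrange inferInstance
    set U : Submodule K V := LinearMap.ker φ with hU
    have hUrange : LinearMap.range g ≤ U := by
      intro x hx
      simp only [hU, LinearMap.mem_ker]
      have : φ x ∈ (LinearMap.range g).map φ := Submodule.mem_map_of_mem hx
      rw [hφ2] at this
      simpa using this
    have hUrank : finrank K U = n := by
      have h := Module.Dual.finrank_ker_add_one_of_ne_zero hφ
      rw [hn] at h
      rw [hU]
      omega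
    have hginv : ∀ x ∈ U, g x ∈ U := fun x _ => hUrange (LinearMap.mem_range_self g x)
    set g' : Module.End K U := g.restrict hginv with hg'
    have hg'nil : IsNilpotent g' := by
      refine ⟨k, ?_⟩
      ext x
      rw [Module.End.pow_restrict]
      simp [LinearMap.restrict_apply, hk]
    obtain ⟨b, hb⟩ := ih U inferInstance inferInstance inferInstance hUrank g' hg'nil
    -- pick v ∉ U
    have hUne : U ≠ ⊤ := fun h => by rw [h, finrank_top] at hUrank; omega
    obtain ⟨v, hv⟩ : ∃ v, v ∉ U := by
      by_contra h
      push_neg at h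
      exact hUne (eq_top_iff.mpr fun x _ => h x)
    have hli : ∀ (c : K), ∀ x ∈ U, c • v + x = 0 → c = 0 := by
      intro c x hx hcx
      by_contra hc
      apply hv
      have : v = -(c⁻¹ • x) := by
        have : c • v = -x := by linear_combination (norm := module) hcx
        calc v = c⁻¹ • (c • v) := by rw [smul_smul, inv_mul_cancel₀ hc, one_smul]
        _ = c⁻¹ • (-x) := by rw [this]
        _ = -(c⁻¹ • x) := by module
      rw [this]
      exact neg_mem (smul_mem _ _ hx)
    have hsup : U ⊔ (K ∙ v) = ⊤ := by
      have hlt : U < U ⊔ (K ∙ v) :=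
        lt_of_le_of_ne le_sup_left (fun h => hv (h ▸ (le_sup_right : (K ∙ v) ≤ U ⊔ (K ∙ v)) (mem_span_singleton_self v)))
      have h1 : n + 1 ≤ finrank K ↥(U ⊔ (K ∙ v)) := by
        have := Submodule.finrank_lt_finrank_of_lt hlt
        omega
      apply Submodule.eq_top_of_finrank_eq
      have h2 := Submodule.finrank_le (U ⊔ (K ∙ v))
      omega
    have hsp : ∀ z : V, ∃ c : K, z + c • v ∈ U := by
      intro z
      have : z ∈ U ⊔ (K ∙ v) := hsup ▸ mem_top
      rw [Submodule.mem_sup] at this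
      obtain ⟨u, hu, w, hw, huw⟩ := this
      obtain ⟨a, rfl⟩ := mem_span_singleton.mp hw
      exact ⟨-a, by rw [← huw]; simpa using hu⟩
    set c := Basis.mkFinCons v b hli hsp with hc
    have hcc : (c : Fin (n+1) → V) = Fin.cons v ((↑) ∘ b) := Basis.coe_mkFinCons v b hli hsp
    refine ⟨c, ?_⟩
    have hUspan : U ≤ span K (c '' {i | 0 < i}) := by
      have hmap : Submodule.map U.subtype (span K (Set.range ⇑b)) = U := by
        rw [b.span_eq, Submodule.map_top, Submodule.range_subtype]
      intro x hx
      have hx' : x ∈ Submodule.map U.subtype (span K (Set.range ⇑b)) := by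
        rw [hmap]; exact hx
      rw [Submodule.map_span] at hx'
      refine span_mono ?_ hx'
      rintro - ⟨-, ⟨i, rfl⟩, rfl⟩
      refine ⟨i.succ, by simp [Fin.succ_pos], ?_⟩
      rw [hcc]
      simp
    intro j
    refine Fin.cases ?_ ?_ j
    · have : g (c 0) ∈ U := hUrange (LinearMap.mem_range_self g _)
      rw [hcc] at *
      exact hUspan (by simpa using this)
    · intro j'
      have hcj : c j'.succ = (b j' : V) := by rw [hcc]; simp
      have h1 : g' (b j') ∈ span K (b '' {i | j' < i}) := hb j'
      have h2 : (g' (b j') : V) = g (b j') := by simp [hg', LinearMap.restrict_apply]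
      have h3 : g (c j'.succ) ∈ Submodule.map U.subtype (span K (b '' {i | j' < i})) := by
        rw [hcj, ← h2]
        exact Submodule.mem_map_of_mem h1
      rw [Submodule.map_span] at h3
      refine span_mono ?_ h3
      rintro - ⟨-, ⟨i, hi, rfl⟩, rfl⟩
      refine ⟨i.succ, ?_, ?_⟩
      · simpa using Fin.succ_lt_succ_iff.mpr hi
      · rw [hcc]; simp

lemma nil_small (V : Type) [AddCommGroup V] [Module ℂ V] [FiniteDimensional ℂ V]
    (g : Module.End ℂ V) (hg : IsNilpotent g) {ε : ℝ} (hε : 0 < ε) :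
    ∃ b : Basis (Fin (finrank ℂ V)) ℂ V,
      (∀ i j, i ≤ j → b.repr (g (b j)) i = 0) ∧
      (∀ i j, ‖b.repr (g (b j)) i‖ ≤ ε) := by
  obtain ⟨b0, hb0⟩ := nil_tri_aux (K := ℂ) (finrank ℂ V) V inferInstance inferInstance
    inferInstance rfl g hg
  set G0 : Fin (finrank ℂ V) → Fin (finrank ℂ V) → ℂ :=
    fun i j => b0.repr (g (b0 j)) i with hG0
  have hG0tri : ∀ i j, i ≤ j → G0 i j = 0 := by
    intro i j hij
    have hsupp := Basis.repr_support_subset_of_mem_span b0 {i | j < i} (hb0 j)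
    by_contra h
    have : i ∈ (b0.repr (g (b0 j))).support := Finsupp.mem_support_iff.mpr h
    exact absurd (hsupp this) (by simpa using hij)
  set S : ℝ := ∑ i, ∑ j, ‖G0 i j‖ with hS
  have hS0 : 0 ≤ S := Finset.sum_nonneg fun _ _ => Finset.sum_nonneg fun _ _ => by positivity
  set T : ℝ := 1 + S / ε with hT
  have hT1 : 1 ≤ T := by rw [hT]; nlinarith [div_nonneg hS0 hε.le]
  have hTpos : 0 < T := by linarith
  have hTc : ∀ k : ℕ, ((T : ℂ) ^ k) ≠ 0 := fun k => pow_ne_zero _ (by exact_mod_cast hTpos.ne')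
  set w : Fin (finrank ℂ V) → ℂˣ := fun i => Units.mk0 ((T : ℂ) ^ (i : ℕ)) (hTc i) with hw
  refine ⟨b0.unitsSMul w, ?_, ?_⟩
  all_goals
    have key : ∀ i j, (b0.unitsSMul w).repr (g ((b0.unitsSMul w) j)) i
        = (T : ℂ) ^ (j : ℕ) * ((T : ℂ) ^ (i : ℕ))⁻¹ * G0 i j := by
      intro i j
      rw [Basis.unitsSMul_apply, Units.smul_def, _root_.map_smul, _root_.map_smul]
      simp only [Finsupp.smul_apply, Basis.repr_unitsSMul, hw, Units.smul_def,
        Units.val_inv_eq_inv_val, Units.val_mk0, smul_eq_mul, inv_pow]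
      ring
  · intro i j hij
    rw [key, hG0tri i j hij, mul_zero]
  · intro i j
    rw [key]
    rcases le_or_gt i j with hij | hij
    · rw [hG0tri i j hij, mul_zero]
      simpa using hε.le
    · have habs : ‖(T : ℂ) ^ (j : ℕ) * ((T : ℂ) ^ (i : ℕ))⁻¹ * G0 i j‖
          = T ^ (j : ℕ) * (T ^ (i : ℕ))⁻¹ * ‖G0 i j‖ := by
        rw [norm_mul, norm_mul, norm_pow, norm_inv, norm_pow, Complex.norm_real,
          Real.norm_eq_abs, abs_of_pos hTpos]
      rw [habs]
      have hTi : (0:ℝ) < T ^ (i : ℕ) := pow_pos hTpos _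
      have hpow : T ^ (j : ℕ) * (T ^ (i : ℕ))⁻¹ ≤ T⁻¹ := by
        have h1 : T ^ ((j : ℕ) + 1) ≤ T ^ (i : ℕ) := pow_le_pow_right₀ hT1 (by omega)
        have h2 : T ^ (j : ℕ) = T⁻¹ * T ^ ((j : ℕ) + 1) := by
          rw [pow_succ']
          rw [← mul_assoc, inv_mul_cancel₀ hTpos.ne', one_mul]
        rw [div_eq_mul_inv] at *
        calc T ^ (j : ℕ) * (T ^ (i : ℕ))⁻¹ ≤ (T⁻¹ * T ^ (i : ℕ)) * (T ^ (i : ℕ))⁻¹ := by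
              apply mul_le_mul_of_nonneg_right _ (inv_nonneg.mpr hTi.le)
              rw [h2]
              exact mul_le_mul_of_nonneg_left h1 (inv_nonneg.mpr hTpos.le)
        _ = T⁻¹ := by
              rw [mul_assoc, mul_inv_cancel₀ hTi.ne', mul_one]
      have hG0S : ‖G0 i j‖ ≤ S := by
        rw [hS]
        calc ‖G0 i j‖ ≤ ∑ j', ‖G0 i j'‖ :=
              Finset.single_le_sum (f := fun j' => ‖G0 i j'‖)
                (fun _ _ => norm_nonneg _) (Finset.mem_univ j)
        _ ≤ ∑ i', ∑ j', ‖G0 i' j'‖ :=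
              Finset.single_le_sum (f := fun i' => ∑ j', ‖G0 i' j'‖)
                (fun _ _ => Finset.sum_nonneg fun _ _ => norm_nonneg _)
                (Finset.mem_univ i)
      have hSε : S ≤ T * ε := by
        have : T * ε = ε + S := by
          rw [hT]
          field_simp
        rw [this]
        linarith
      calc T ^ (j : ℕ) * (T ^ (i : ℕ))⁻¹ * ‖G0 i j‖ ≤ T⁻¹ * S := by
            apply mul_le_mul hpow hG0S (norm_nonneg _) (inv_nonneg.mpr hTpos.le)
      _ ≤ T⁻¹ * (T * ε) := mul_le_mul_of_nonneg_left hSε (inv_nonneg.mpr hTpos.le)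
      _ = ε := by rw [← mul_assoc, inv_mul_cancel₀ hTpos.ne', one_mul]

lemma genEig_le_one {W : Type} [AddCommGroup W] [Module ℂ W] (f : Module.End ℂ W) (μ : ℂ)
    (h2 : f.genEigenspace μ 2 ≤ f.genEigenspace μ 1) (k : ℕ) :
    f.genEigenspace μ k ≤ f.genEigenspace μ 1 := by
  induction k with
  | zero =>
    intro x hx
    rw [Nat.cast_zero, Module.End.mem_genEigenspace_zero] at hx
    simp [hx]
  | succ k ih =>
    intro x hx
    rw [Module.End.mem_genEigenspace_nat, LinearMap.mem_ker] at hx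
    have h1 : (f - μ • 1) x ∈ f.genEigenspace μ k := by
      rw [Module.End.mem_genEigenspace_nat, LinearMap.mem_ker, ← Module.End.mul_apply, ← pow_succ]
      exact hx
    have h1' := ih h1
    rw [Module.End.mem_genEigenspace_one] at h1'
    have : x ∈ f.genEigenspace μ 2 := by
      rw [show ((2:ℕ∞)) = ((2:ℕ) : ℕ∞) from rfl, Module.End.mem_genEigenspace_nat,
        LinearMap.mem_ker, pow_two, Module.End.mul_apply]
      simp only [LinearMap.sub_apply, LinearMap.smul_apply, Module.End.one_apply] at h1' ⊢
      rw [h1']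
      abel
    exact h2 this

lemma block_basis (W : Type) [AddCommGroup W] [Module ℂ W] [FiniteDimensional ℂ W]
    (f : Module.End ℂ W) (μ : ℂ)
    (h : ∀ x ∈ f.maxGenEigenspace μ, f x ∈ f.maxGenEigenspace μ)
    (hss : Module.End.HasEigenvalue f μ → μ.re = 0 →
      f.genEigenspace μ 2 ≤ f.genEigenspace μ 1)
    (ε : ℝ) (hε : μ.re < 0 → 0 < ε) (hε0 : 0 ≤ ε)
    (hμ : Module.End.HasEigenvalue f μ → μ.re ≤ 0) :
    ∃ v : Basis (Fin (finrank ℂ (f.maxGenEigenspace μ))) ℂ (f.maxGenEigenspace μ),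
      (∀ j, v.repr ((f.restrict h) (v j)) j = μ) ∧
      (∀ i j, i ≠ j → ‖v.repr ((f.restrict h) (v j)) i‖ ≤ ε) ∧
      (∀ i j, i ≠ j → μ.re = 0 → v.repr ((f.restrict h) (v j)) i = 0) := by
  rcases Nat.eq_zero_or_pos (finrank ℂ (f.maxGenEigenspace μ)) with h0 | hpos
  · have : IsEmpty (Fin (finrank ℂ (f.maxGenEigenspace μ))) := by rw [h0]; infer_instance
    exact ⟨Module.finBasis ℂ _, fun j => isEmptyElim j, fun i j _ => isEmptyElim i,
      fun i j _ _ => isEmptyElim i⟩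
  have hnt : Nontrivial (f.maxGenEigenspace μ) := by
    apply Module.nontrivial_of_finrank_pos hpos
  have hne : f.maxGenEigenspace μ ≠ ⊥ := Submodule.nontrivial_iff_ne_bot.mp hnt
  have heig : Module.End.HasEigenvalue f μ := by
    apply Module.End.hasEigenvalue_of_hasGenEigenvalue (k := finrank ℂ W)
    rw [Module.End.hasGenEigenvalue_iff, ← Module.End.maxGenEigenspace_eq_genEigenspace_finrank]
    exact hne
  rcases lt_or_eq_of_le (hμ heig) with hre | hre
  · -- stable case
    have hnil := Module.End.isNilpotent_restrict_maxGenEigenspace_sub_algebraMap f μ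
    obtain ⟨v, hv1, hv2⟩ := nil_small _ _ hnil (hε hre)
    have hrel : ∀ x : f.maxGenEigenspace μ,
        (f.restrict h) x
          = ((f - algebraMap ℂ (Module.End ℂ W) μ).restrict
              (Module.End.mapsTo_maxGenEigenspace_of_comm
                (Algebra.mul_sub_algebraMap_commutes f μ) μ)) x + μ • x := by
      intro x
      apply Subtype.ext
      change f (x : W) = (f - algebraMap ℂ (Module.End ℂ W) μ) (x : W) + μ • (x : W)
      simp [LinearMap.restrict_apply, algebraMap_end_apply, LinearMap.sub_apply]
    refine ⟨v, ?_, ?_, ?_⟩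
    · intro j
      rw [hrel, map_add, _root_.map_smul]
      simp only [Finsupp.add_apply, Finsupp.smul_apply, Basis.repr_self, smul_eq_mul]
      rw [hv1 j j le_rfl]
      simp
    · intro i j hij
      rw [hrel, map_add, _root_.map_smul]
      simp only [Finsupp.add_apply, Finsupp.smul_apply, Basis.repr_self, smul_eq_mul]
      rw [Finsupp.single_apply, if_neg (Ne.symm hij)]
      simpa using hv2 i j
    · intro i j hij habs
      exfalso
      rw [habs] at hre
      exact lt_irrefl 0 hre
  · -- marginal case
    have hsemi := hss heig hre
    have heigsp : ∀ x : f.maxGenEigenspace μ, f (x : W) = μ • (x : W) := by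
      intro x
      have hx : (x : W) ∈ (f.genEigenspace μ) ↑(finrank ℂ W) := by
        rw [← Module.End.maxGenEigenspace_eq_genEigenspace_finrank]
        exact x.2
      have hx1 := genEig_le_one f μ hsemi (finrank ℂ W) hx
      rw [Module.End.mem_genEigenspace_one] at hx1
      exact hx1
    set v := Module.finBasis ℂ (f.maxGenEigenspace μ) with hv
    have hdiag : ∀ j, (f.restrict h) (v j) = μ • (v j) := by
      intro j
      apply Subtype.ext
      simp [LinearMap.restrict_apply, heigsp]
    refine ⟨v, ?_, ?_, ?_⟩
    · intro j
      rw [hdiag, _root_.map_smul]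
      simp
    · intro i j hij
      rw [hdiag, _root_.map_smul]
      simp only [Finsupp.smul_apply, Basis.repr_self, smul_eq_mul]
      rw [Finsupp.single_apply, if_neg (Ne.symm hij), mul_zero]
      simpa using hε0
    · intro i j hij _
      rw [hdiag, _root_.map_smul]
      simp only [Finsupp.smul_apply, Basis.repr_self, smul_eq_mul]
      rw [Finsupp.single_apply, if_neg (Ne.symm hij)]
      simp

lemma exists_good_basis (N : ℕ) (A : Matrix (Fin N) (Fin N) ℂ)
    (hspec : ∀ μ ∈ spectrum ℂ A, μ.re ≤ 0)
    (hsemi : ∀ μ ∈ spectrum ℂ A, μ.re = 0 →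
      ∀ v : Fin N → ℂ, ((A - μ • 1) * (A - μ • 1)) *ᵥ v = 0 → (A - μ • 1) *ᵥ v = 0) :
    ∃ b : Basis (Fin N) ℂ (Fin N → ℂ),
      (∀ j, ((b.repr (A *ᵥ b j)) j).re ≤ 0) ∧
      (∀ i j, i ≠ j → ‖b.repr (A *ᵥ b j) i‖
        ≤ min (-((b.repr (A *ᵥ b i)) i).re) (-((b.repr (A *ᵥ b j)) j).re) / N) := by
  classical
  set f : Module.End ℂ (Fin N → ℂ) := Matrix.toLinAlgEquiv' A with hf
  have hfapp : ∀ x, f x = A *ᵥ x := fun x => rfl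
  have hfspec : spectrum ℂ f = spectrum ℂ A := AlgEquiv.spectrum_eq Matrix.toLinAlgEquiv' A
  have heigspec : ∀ μ : ℂ, Module.End.HasEigenvalue f μ → μ ∈ spectrum ℂ A := by
    intro μ hμ
    rw [← hfspec]
    exact (Module.End.hasEigenvalue_iff_mem_spectrum).mp hμ
  -- semisimplicity in endomorphism form
  have hss : ∀ μ : ℂ, Module.End.HasEigenvalue f μ → μ.re = 0 →
      f.genEigenspace μ 2 ≤ f.genEigenspace μ 1 := by
    intro μ hμ hre x hx
    rw [show ((2:ℕ∞)) = ((2:ℕ) : ℕ∞) from rfl, Module.End.mem_genEigenspace_nat,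
      LinearMap.mem_ker] at hx
    rw [show ((1:ℕ∞)) = ((1:ℕ) : ℕ∞) from rfl, Module.End.mem_genEigenspace_nat,
      LinearMap.mem_ker, pow_one]
    have hfm : f - μ • 1 = Matrix.toLinAlgEquiv' (A - μ • 1) := by
      simp only [hf, map_sub, _root_.map_smul, _root_.map_one]
    have hx' : ((A - μ • 1) * (A - μ • 1)) *ᵥ x = 0 := by
      have h2 : (f - μ • 1) * (f - μ • 1) = Matrix.toLinAlgEquiv' ((A - μ • 1) * (A - μ • 1)) := by
        rw [_root_.map_mul, ← hfm]
      have h3 : Matrix.toLinAlgEquiv' ((A - μ • 1) * (A - μ • 1)) x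
          = ((A - μ • 1) * (A - μ • 1)) *ᵥ x := rfl
      rw [← h3, ← h2, ← pow_two]
      exact hx
    have := hsemi μ (heigspec μ hμ) hre x hx'
    calc (f - μ • 1) x = (A - μ • 1) *ᵥ x := by rw [hfm]; rfl
    _ = 0 := this
  -- the block bases
  have hmapsto : ∀ μ : ℂ, ∀ x ∈ f.maxGenEigenspace μ, f x ∈ f.maxGenEigenspace μ :=
    fun μ x hx =>
      Module.End.mapsTo_maxGenEigenspace_of_comm (Commute.refl f) μ hx
  have hblock := fun μ : ℂ => block_basis (Fin N → ℂ) f μ (hmapsto μ) (hss μ)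
    (max 0 ((-μ.re) / (N + 1)))
    (fun h => lt_max_of_lt_right (div_pos (by linarith) (by positivity)))
    (le_max_left _ _)
    (fun h => hspec μ (heigspec μ h))
  choose v hv1 hv2 hv3 using hblock
  -- global basis
  have hInt : DirectSum.IsInternal (fun μ : ℂ => f.maxGenEigenspace μ) :=
    DirectSum.isInternal_submodule_of_iSupIndep_of_iSup_eq_top
      (f.independent_maxGenEigenspace) (Module.End.iSup_maxGenEigenspace_eq_top f)
  set cb := hInt.collectedBasis v with hcb
  haveI : Fintype (Σ μ : ℂ, Fin (finrank ℂ (f.maxGenEigenspace μ))) :=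
    FiniteDimensional.fintypeBasisIndex cb
  have hcard : Fintype.card (Σ μ : ℂ, Fin (finrank ℂ (f.maxGenEigenspace μ))) = N := by
    rw [← Module.finrank_eq_card_basis cb, Module.finrank_fin_fun]
  set e := Fintype.equivFinOfCardEq hcard with he
  refine ⟨cb.reindex e, ?_, ?_⟩
  all_goals
    have hkey : ∀ p q : (Σ μ : ℂ, Fin (finrank ℂ (f.maxGenEigenspace μ))),
        cb.repr (A *ᵥ cb q) p
          = if hpq : p.1 = q.1 then (v q.1).repr ((f.restrict (hmapsto q.1)) (v q.1 q.2))
              (hpq ▸ p.2) else 0 := by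
      intro p q
      have hmem : A *ᵥ (cb q) ∈ f.maxGenEigenspace q.1 := by
        rw [← hfapp]
        exact hmapsto q.1 _ (by simpa [hcb] using hInt.collectedBasis_mem v q)
      rcases p with ⟨μp, ip⟩
      rcases q with ⟨μq, iq⟩
      by_cases hpq : μp = μq
      · subst hpq
        rw [dif_pos rfl]
        have harg : (⟨A *ᵥ cb ⟨μp, iq⟩, hmem⟩ : f.maxGenEigenspace μp)
            = (f.restrict (hmapsto μp)) (v μp iq) := by
          apply Subtype.ext
          have hcoe : cb ⟨μp, iq⟩ = ↑(v μp iq) := by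
            rw [hcb, hInt.collectedBasis_coe v]
          simp only [LinearMap.restrict_apply, hfapp, hcoe]
        rw [hInt.collectedBasis_repr_of_mem v hmem, harg]
      · rw [dif_neg hpq]
        exact hInt.collectedBasis_repr_of_mem_ne v (fun hh => hpq hh.symm) hmem
    have hdiagspec : ∀ q : (Σ μ : ℂ, Fin (finrank ℂ (f.maxGenEigenspace μ))),
        q.1 ∈ spectrum ℂ A := by
      intro q
      have hpos : 0 < finrank ℂ (f.maxGenEigenspace q.1) := q.2.pos
      apply heigspec
      apply Module.End.hasEigenvalue_of_hasGenEigenvalue (k := finrank ℂ (Fin N → ℂ))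
      rw [Module.End.hasGenEigenvalue_iff, ← Module.End.maxGenEigenspace_eq_genEigenspace_finrank]
      exact Submodule.nontrivial_iff_ne_bot.mp (Module.nontrivial_of_finrank_pos hpos)
    have hdiag : ∀ q, cb.repr (A *ᵥ cb q) q = q.1 := by
      intro q
      rw [hkey q q, dif_pos rfl]
      exact hv1 q.1 q.2
  · -- diagonal real part
    intro j
    rw [Basis.repr_reindex_apply, Basis.reindex_apply, hdiag]
    exact hspec _ (hdiagspec (e.symm j))
  · -- off-diagonal bound
    intro i j hij
    rw [Basis.repr_reindex_apply, Basis.reindex_apply, Basis.repr_reindex_apply,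
      Basis.reindex_apply, Basis.repr_reindex_apply, hdiag, hdiag, hkey]
    set p := e.symm i with hp
    set q := e.symm j with hq
    have hNpos : 0 < (N : ℝ) := by
      have := i.pos
      exact_mod_cast this
    have hre : (q.1).re ≤ 0 := hspec _ (hdiagspec q)
    have hrep : (p.1).re ≤ 0 := hspec _ (hdiagspec p)
    by_cases hpq : p.1 = q.1
    · rw [dif_pos hpq]
      have hij' : (hpq ▸ p.2 : Fin (finrank ℂ (f.maxGenEigenspace q.1))) ≠ q.2 := by
        intro hcon
        apply hij
        have : p = q := by
          rcases p with ⟨μp, ip⟩; rcases q with ⟨μq, iq⟩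
          cases hpq
          cases hcon
          rfl
        have h2 := congrArg e this
        rw [hp, hq] at h2
        simpa using h2
      have hb := hv2 q.1 _ q.2 hij'
      have hεeq : max 0 ((-(q.1).re) / (N + 1)) = (-(q.1).re) / (N + 1) := by
        exact max_eq_right (div_nonneg (by linarith) (by positivity))
      rw [hεeq] at hb
      refine hb.trans ?_
      rw [hpq]
      rw [min_self]
      apply div_le_div_of_nonneg_left (by linarith) hNpos (by linarith)
    · rw [dif_neg hpq]
      simp only [norm_zero]
      apply div_nonneg _ hNpos.le
      rw [le_min_iff]
      constructor <;> linarith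

lemma quad_bound (N : ℕ) (B : Matrix (Fin N) (Fin N) ℂ)
    (hdiag : ∀ j, (B j j).re ≤ 0)
    (hoff : ∀ i j, i ≠ j → ‖B i j‖ ≤ min (-(B i i).re) (-(B j j).re) / N)
    (w : Fin N → ℂ) : (star w ⬝ᵥ (B *ᵥ w)).re ≤ 0 := by
  classical
  set a : Fin N → ℝ := fun i => -(B i i).re with ha
  set n2 : Fin N → ℝ := fun i => Complex.normSq (w i) with hn2
  have ha0 : ∀ i, 0 ≤ a i := fun i => by simpa [ha] using hdiag i
  have hn20 : ∀ i, 0 ≤ n2 i := fun i => Complex.normSq_nonneg _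
  set F : Fin N → Fin N → ℝ := fun i j => (starRingEnd ℂ (w i) * (B i j * w j)).re with hF
  have hre : (star w ⬝ᵥ (B *ᵥ w)).re = ∑ i, ∑ j, F i j := by
    rw [dotProduct]
    rw [Complex.re_sum]
    apply Finset.sum_congr rfl
    intro i _
    rw [mulVec, dotProduct, Pi.star_apply, Complex.star_def, Finset.mul_sum, Complex.re_sum]
  have hFdiag : ∀ i, F i i = -(a i) * n2 i := by
    intro i
    have hh : starRingEnd ℂ (w i) * (B i i * w i) = B i i * (Complex.normSq (w i) : ℂ) := by
      rw [← Complex.mul_conj]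
      ring
    rw [hF]
    simp only [hh]
    rw [Complex.mul_re, Complex.ofReal_re, Complex.ofReal_im]
    rw [ha]
    ring
  have hFoff : ∀ i j, i ≠ j → F i j ≤ (a i * n2 i)/(2*N) + (a j * n2 j)/(2*N) := by
    intro i j hij
    have hNpos : (0:ℝ) < N := by
      have := i.pos
      exact_mod_cast this
    have h1 : F i j ≤ ‖w i‖ * (‖B i j‖ * ‖w j‖) := by
      rw [hF]
      refine (Complex.re_le_norm _).trans ?_
      rw [norm_mul, norm_mul, Complex.norm_conj]
    have h2 : ‖B i j‖ ≤ min (a i) (a j) / N := hoff i j hij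
    have habsnn : (0:ℝ) ≤ ‖w i‖ * ‖w j‖ := by positivity
    have h3 : ‖w i‖ * (‖B i j‖ * ‖w j‖)
        ≤ (min (a i) (a j) / N) * (‖w i‖ * ‖w j‖) := by
      calc ‖w i‖ * (‖B i j‖ * ‖w j‖)
          = ‖B i j‖ * (‖w i‖ * ‖w j‖) := by ring
      _ ≤ (min (a i) (a j) / N) * (‖w i‖ * ‖w j‖) :=
          mul_le_mul_of_nonneg_right h2 habsnn
    refine (h1.trans h3).trans ?_
    have hmin0 : 0 ≤ min (a i) (a j) := le_min (ha0 i) (ha0 j)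
    have hamgm : ‖w i‖ * ‖w j‖ ≤ (n2 i + n2 j)/2 := by
      nlinarith [sq_nonneg (‖w i‖ - ‖w j‖), Complex.sq_norm (w i),
        Complex.sq_norm (w j)]
    calc (min (a i) (a j) / N) * (‖w i‖ * ‖w j‖)
        ≤ (min (a i) (a j) / N) * ((n2 i + n2 j)/2) :=
          mul_le_mul_of_nonneg_left hamgm (by positivity)
    _ = (min (a i) (a j) * n2 i)/(2*N) + (min (a i) (a j) * n2 j)/(2*N) := by
          field_simp
    _ ≤ (a i * n2 i)/(2*N) + (a j * n2 j)/(2*N) := by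
          gcongr <;>
            first
              | exact min_le_left _ _
              | exact min_le_right _ _
              | exact hn20 _
              | positivity
  rcases Nat.eq_zero_or_pos N with hN0 | hNpos'
  · subst hN0
    rw [hre]
    simp
  · have hNR : (0:ℝ) < N := by exact_mod_cast hNpos'
    set Q : ℝ := ∑ i, a i * n2 i with hQ
    have hQ0 : 0 ≤ Q := Finset.sum_nonneg fun i _ => mul_nonneg (ha0 i) (hn20 i)
    have hNQ : (N:ℝ) * (Q/(2*N)) = Q/2 := by
      field_simp
    calc (star w ⬝ᵥ (B *ᵥ w)).re = ∑ i, ∑ j, F i j := hre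
    _ ≤ ∑ i, (-(a i * n2 i) + ((a i * n2 i)/2 + Q/(2*N))) := by
        apply Finset.sum_le_sum
        intro i _
        rw [← Finset.add_sum_erase _ _ (Finset.mem_univ i), hFdiag i]
        have t1 : ∑ j ∈ Finset.univ.erase i, F i j ≤ (a i * n2 i)/2 + Q/(2*N) := by
          calc ∑ j ∈ Finset.univ.erase i, F i j
              ≤ ∑ j ∈ Finset.univ.erase i, ((a i * n2 i)/(2*N) + (a j * n2 j)/(2*N)) :=
                Finset.sum_le_sum fun j hj =>
                  hFoff i j (Ne.symm (Finset.ne_of_mem_erase hj))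
          _ = (Finset.univ.erase i).card * ((a i * n2 i)/(2*N))
                + ∑ j ∈ Finset.univ.erase i, (a j * n2 j)/(2*N) := by
                rw [Finset.sum_add_distrib, Finset.sum_const, nsmul_eq_mul]
          _ ≤ (N:ℝ) * ((a i * n2 i)/(2*N)) + ∑ j, (a j * n2 j)/(2*N) := by
                apply add_le_add
                · apply mul_le_mul_of_nonneg_right _
                    (div_nonneg (mul_nonneg (ha0 i) (hn20 i)) (by positivity))
                  have hcard : (Finset.univ.erase i).card ≤ N := by
                    calc (Finset.univ.erase i).card ≤ Finset.univ.card :=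
                          Finset.card_le_card (Finset.erase_subset _ _)
                    _ = N := by rw [Finset.card_univ, Fintype.card_fin]
                  exact_mod_cast hcard
                · apply Finset.sum_le_sum_of_subset_of_nonneg (Finset.subset_univ _)
                  intro j _ _
                  exact div_nonneg (mul_nonneg (ha0 j) (hn20 j)) (by positivity)
          _ = (a i * n2 i)/2 + Q/(2*N) := by
                rw [hQ, ← Finset.sum_div]
                field_simp
        linarith [t1]
    _ = -Q + (Q/2 + (N:ℝ) * (Q/(2*N))) := by
        rw [Finset.sum_add_distrib, Finset.sum_add_distrib, Finset.sum_neg_distrib,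
          ← Finset.sum_div, Finset.sum_const, nsmul_eq_mul, Finset.card_univ, Fintype.card_fin,
          ← hQ]
    _ ≤ 0 := by
        rw [hNQ]
        linarith


/-- Lyapunov inequality for matrices with spectrum in the closed left
half-plane and semisimple imaginary-axis eigenvalues.
If every complex eigenvalue of `M` has nonpositive real part and every eigenvalue `λ`
with `Re λ = 0` is semisimple (`ker((M − λI)²) = ker(M − λI)` over `ℂ`), then there is a
symmetric positive definite `P` with `P M + Mᵀ P` negative semidefinite. -/
theorem lyapunov_semidefinite_of_semisimple_marginal_spectrum
    (N : ℕ) (M : Matrix (Fin N) (Fin N) ℝ)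
    (hspec : ∀ μ ∈ spectrum ℂ (M.map (algebraMap ℝ ℂ)), μ.re ≤ 0)
    (hsemi : ∀ μ ∈ spectrum ℂ (M.map (algebraMap ℝ ℂ)), μ.re = 0 →
      ∀ v : Fin N → ℂ,
        ((M.map (algebraMap ℝ ℂ) - μ • 1) * (M.map (algebraMap ℝ ℂ) - μ • 1)) *ᵥ v = 0 →
          (M.map (algebraMap ℝ ℂ) - μ • 1) *ᵥ v = 0) :
    ∃ P : Matrix (Fin N) (Fin N) ℝ, P.PosDef ∧
      ∀ x : Fin N → ℝ, x ⬝ᵥ ((P * M + Mᵀ * P) *ᵥ x) ≤ 0 := by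
  classical
  set A : Matrix (Fin N) (Fin N) ℂ := M.map (algebraMap ℝ ℂ) with hA
  obtain ⟨b, hb1, hb2⟩ := exists_good_basis N A hspec hsemi
  set B : Matrix (Fin N) (Fin N) ℂ := Matrix.of (fun i j => b.repr (A *ᵥ b j) i) with hB
  have hBij : ∀ i j, B i j = b.repr (A *ᵥ b j) i := fun i j => rfl
  have hquad : ∀ w : Fin N → ℂ, (star w ⬝ᵥ (B *ᵥ w)).re ≤ 0 := by
    apply quad_bound
    · intro j; exact hb1 j
    · intro i j hij; exact hb2 i j hij
  set S : Matrix (Fin N) (Fin N) ℂ := (Pi.basisFun ℂ (Fin N)).toMatrix ⇑b with hS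
  letI : Invertible S := Basis.invertibleToMatrix (Pi.basisFun ℂ (Fin N)) b
  have hSij : ∀ i j, S i j = b j i := by
    intro i j
    rw [hS, Basis.toMatrix_apply, Pi.basisFun_repr]
  have hAS : A * S = S * B := by
    ext i j
    rw [Matrix.mul_apply, Matrix.mul_apply]
    have hl : ∑ k, A i k * S k j = (A *ᵥ b j) i := by
      rw [mulVec, dotProduct]
      exact Finset.sum_congr rfl fun k _ => by rw [hSij]
    have hr : ∑ k, S i k * B k j = (A *ᵥ b j) i := by
      have := b.sum_repr (A *ᵥ b j)
      calc ∑ k, S i k * B k j = ∑ k, (b.repr (A *ᵥ b j) k) • b k i := by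
            refine Finset.sum_congr rfl fun k _ => ?_
            rw [hSij, hBij, smul_eq_mul]
            ring
      _ = (∑ k, (b.repr (A *ᵥ b j) k) • b k) i := by
            rw [Finset.sum_apply]
            exact Finset.sum_congr rfl fun k _ => rfl
      _ = (A *ᵥ b j) i := by rw [this]
    rw [hl, hr]
  set Si : Matrix (Fin N) (Fin N) ℂ := ⅟S with hSi
  have hBSi : Si * A * S = B := by
    calc Si * A * S = Si * (A * S) := by rw [Matrix.mul_assoc]
    _ = Si * (S * B) := by rw [hAS]
    _ = (Si * S) * B := by rw [Matrix.mul_assoc]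
    _ = B := by rw [invOf_mul_self, Matrix.one_mul]
  set H : Matrix (Fin N) (Fin N) ℂ := Siᴴ * Si with hH
  have hHherm : Hᴴ = H := by
    rw [hH, Matrix.conjTranspose_mul, Matrix.conjTranspose_conjTranspose]
  set P : Matrix (Fin N) (Fin N) ℝ := Matrix.of (fun i j => (H i j).re) with hP
  have hPij : ∀ i j, P i j = (H i j).re := fun i j => rfl
  set cplx : (Fin N → ℝ) → (Fin N → ℂ) := fun x i => (x i : ℂ) with hcplx
  have hcplx0 : ∀ x : Fin N → ℝ, x ≠ 0 → cplx x ≠ 0 := by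
    intro x hx hc
    apply hx
    funext i
    have := congrFun hc i
    simpa [hcplx] using this
  have pair : ∀ u y : Fin N → ℝ, u ⬝ᵥ (P *ᵥ y) = (star (cplx u) ⬝ᵥ (H *ᵥ (cplx y))).re := by
    intro u y
    rw [dotProduct, dotProduct, Complex.re_sum]
    refine Finset.sum_congr rfl fun i _ => ?_
    rw [mulVec, dotProduct, mulVec, dotProduct, Pi.star_apply, Complex.star_def,
      Finset.mul_sum, Finset.mul_sum, Complex.re_sum]
    refine Finset.sum_congr rfl fun j _ => ?_
    have h1 : starRingEnd ℂ (cplx u i) = ((u i : ℝ) : ℂ) := by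
      rw [hcplx]; exact Complex.conj_ofReal _
    rw [h1]
    have h2 : (((u i : ℝ) : ℂ) * (H i j * cplx y j)).re = u i * (H i j * cplx y j).re := by
      rw [Complex.re_ofReal_mul]
    have h3 : (H i j * cplx y j).re = (H i j).re * y j := by
      rw [hcplx]
      simp only [Complex.mul_re, Complex.ofReal_re, Complex.ofReal_im, mul_zero, sub_zero]
    rw [h2, h3, hPij]
  have hmv : ∀ x : Fin N → ℝ, A *ᵥ (cplx x) = cplx (M *ᵥ x) := by
    intro x
    funext i
    rw [hcplx]
    simp only [mulVec, dotProduct, hA, Matrix.map_apply]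
    push_cast
    rfl
  have t1 : ∀ u v' : Fin N → ℂ, star u ⬝ᵥ (H *ᵥ v') = star (Si *ᵥ u) ⬝ᵥ (Si *ᵥ v') := by
    intro u v'
    rw [hH, ← Matrix.mulVec_mulVec, Matrix.dotProduct_mulVec, ← Matrix.star_mulVec]
  have hconj : ∀ u v' : Fin N → ℂ, star u ⬝ᵥ v' = starRingEnd ℂ (star v' ⬝ᵥ u) := by
    intro u v'
    rw [dotProduct, dotProduct, map_sum]
    refine Finset.sum_congr rfl fun i _ => ?_
    simp only [Pi.star_apply, Complex.star_def, _root_.map_mul, Complex.conj_conj]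
    ring
  refine ⟨P, Matrix.posDef_iff_dotProduct_mulVec.mpr ⟨?_, ?_⟩, ?_⟩
  · -- Hermitian
    ext i j
    rw [Matrix.conjTranspose_apply, hPij, hPij]
    have : H j i = starRingEnd ℂ (H i j) := by
      conv_lhs => rw [← hHherm]
      rw [Matrix.conjTranspose_apply]
      rfl
    rw [this]
    simp [Complex.conj_re]
  · -- positivity
    intro x hx
    have hsx : star x = x := star_trivial x
    have h1 : star x ⬝ᵥ P *ᵥ x = (star (Si *ᵥ cplx x) ⬝ᵥ (Si *ᵥ cplx x)).re := by
      rw [hsx, pair, t1]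
    set w := Si *ᵥ cplx x with hw
    have hwne : w ≠ 0 := by
      intro hw0
      apply hcplx0 x hx
      have : S *ᵥ w = cplx x := by
        rw [hw, Matrix.mulVec_mulVec, mul_invOf_self, Matrix.one_mulVec]
      rw [hw0, Matrix.mulVec_zero] at this
      exact this.symm
    rw [h1]
    rw [dotProduct, Complex.re_sum]
    obtain ⟨i0, hi0⟩ := Function.ne_iff.mp hwne
    apply Finset.sum_pos'
    · intro i _
      simp only [Pi.star_apply, Complex.star_def]
      rw [show starRingEnd ℂ (w i) * w i = (Complex.normSq (w i) : ℂ) by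
        rw [← Complex.mul_conj]; ring]
      simp [Complex.normSq_nonneg]
    · refine ⟨i0, Finset.mem_univ _, ?_⟩
      simp only [Pi.star_apply, Complex.star_def]
      rw [show starRingEnd ℂ (w i0) * w i0 = (Complex.normSq (w i0) : ℂ) by
        rw [← Complex.mul_conj]; ring]
      simpa using Complex.normSq_pos.mpr (by simpa using hi0)
  · -- the Lyapunov inequality
    intro x
    rw [Matrix.add_mulVec, dotProduct_add, ← Matrix.mulVec_mulVec, ← Matrix.mulVec_mulVec]
    set w := Si *ᵥ cplx x with hw
    have hBw : Si *ᵥ (A *ᵥ cplx x) = B *ᵥ w := by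
      have hSiA : Si * A = Si * A * S * Si := by
        calc Si * A = Si * A * 1 := by rw [Matrix.mul_one]
        _ = Si * A * (S * Si) := by rw [mul_invOf_self]
        _ = Si * A * S * Si := by rw [Matrix.mul_assoc (Si * A)]
      rw [hw, Matrix.mulVec_mulVec, Matrix.mulVec_mulVec, ← hBSi, ← hSiA]
    have hterm1 : x ⬝ᵥ (P *ᵥ (M *ᵥ x)) = (star w ⬝ᵥ (B *ᵥ w)).re := by
      rw [pair, ← hmv, t1, hBw]
    have hterm2 : x ⬝ᵥ (Mᵀ *ᵥ (P *ᵥ x)) = (star w ⬝ᵥ (B *ᵥ w)).re := by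
      rw [Matrix.dotProduct_mulVec, Matrix.vecMul_transpose, pair, ← hmv, t1, hBw,
        hconj (B *ᵥ w) w]
      exact Complex.conj_re _
    rw [hterm1, hterm2]
    have := hquad w
    linarith
end

section
/- Let t̄₀ ∈ ℝ, τ_d > 0, and let (t_ℓ)_{ℓ≥0} be a strictly increasing sequence with t₀ = t̄₀, t_{ℓ+1} − t_ℓ ≥ τ_d for all ℓ, and t_ℓ → ∞. Let g : ℕ → {c, d} label each interval, let λ^c > 0, λ^d > 0, a ≥ 1, and let λ ∈ (0, λ^c) and κ ≥ (λ^d + λ)/(λ^c − λ). Let V : [t̄₀, ∞) → [0, ∞) satisfy: (i) for every ℓ and every ζ ∈ [t_ℓ, t_{ℓ+1}), V(ζ) ≤ e^{−λ^c (ζ − t_ℓ)} V(t_ℓ) if g(ℓ) = c, and V(ζ) ≤ e^{λ^d (ζ − t_ℓ)} V(t_ℓ) if g(ℓ) = d; (ii) for every ℓ, V(t_{ℓ+1}) ≤ a · e^{−λ^c (t_{ℓ+1} − t_ℓ)} V(t_ℓ) if g(ℓ) = c, and V(t_{ℓ+1}) ≤ a · e^{λ^d (t_{ℓ+1} − t_ℓ)}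 V(t_ℓ) if g(ℓ) = d. For t ≥ t̄₀ let T^c(t) (resp. T^d(t)) be the total length of [t̄₀, t) ∩ [t_ℓ, t_{ℓ+1}) summed over ℓ with g(ℓ) = c (resp. g(ℓ) = d), and assume T^c(t) ≥ κ T^d(t) for all t ≥ t̄₀. Then for all t ≥ t̄₀, V(t) ≤ e^{−(λ − (ln a)/τ_d)(t − t̄₀)} V(t̄₀). -/
open Filter

/-- dwell-time switching estimate, the analytic core of Lemma 3.
A piecewise Lyapunov function that decays at rate `λᶜ` on good intervals (`g ℓ = true`),
grows at rate at most `λᵈ` on bad intervals, jumps by at most a factor `a ≥ 1` at the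
switching times, and whose good/bad activation times satisfy `Tᶜ(t) ≥ κ Tᵈ(t)` with
`κ ≥ (λᵈ + λ)/(λᶜ − λ)`, decays like `exp(−(λ − ln a / τ_d)(t − t̄₀))`. -/
theorem dwell_time_switching_estimate
    (tbar₀ τd : ℝ) (hτd : 0 < τd)
    (t : ℕ → ℝ) (ht0 : t 0 = tbar₀)
    (hgap : ∀ ℓ : ℕ, τd ≤ t (ℓ + 1) - t ℓ)
    (htop : Tendsto t atTop atTop)
    (g : ℕ → Bool)  -- `true` labels a `c`-interval, `false` a `d`-interval
    (lc ld a lam κ : ℝ)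
    (hlc : 0 < lc) (hld : 0 < ld) (ha : 1 ≤ a)
    (hlam0 : 0 < lam) (hlamc : lam < lc)
    (hκ : (ld + lam) / (lc - lam) ≤ κ)
    (V : ℝ → ℝ) (hVnonneg : ∀ s : ℝ, tbar₀ ≤ s → 0 ≤ V s)
    (hVint : ∀ ℓ : ℕ, ∀ ζ : ℝ, t ℓ ≤ ζ → ζ < t (ℓ + 1) →
      V ζ ≤ Real.exp ((if g ℓ then -lc else ld) * (ζ - t ℓ)) * V (t ℓ))
    (hVjump : ∀ ℓ : ℕ,
      V (t (ℓ + 1)) ≤ a * (Real.exp ((if g ℓ then -lc else ld) * (t (ℓ + 1) - t ℓ)) * V (t ℓ)))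
    (hTT : ∀ τ : ℝ, tbar₀ ≤ τ →
      κ * (∑' ℓ : ℕ, if g ℓ = false then max 0 (min τ (t (ℓ + 1)) - max tbar₀ (t ℓ)) else 0)
        ≤ ∑' ℓ : ℕ, if g ℓ = true then max 0 (min τ (t (ℓ + 1)) - max tbar₀ (t ℓ)) else 0) :
    ∀ τ : ℝ, tbar₀ ≤ τ →
      V τ ≤ Real.exp (-(lam - Real.log a / τd) * (τ - tbar₀)) * V tbar₀ := by
  intro τ hτ
  have ha0 : (0:ℝ) < a := lt_of_lt_of_le one_pos ha
  have hmono : Monotone t := by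
    apply monotone_nat_of_le_succ
    intro n; have := hgap n; linarith
  have hlin : ∀ n : ℕ, tbar₀ + n * τd ≤ t n := by
    intro n
    induction n with
    | zero => simp [ht0]
    | succ k ih =>
      have := hgap k
      push_cast
      linarith
  have htb : ∀ n : ℕ, tbar₀ ≤ t n := by
    intro n
    have := hlin n
    have : (0:ℝ) ≤ n * τd := by positivity
    nlinarith [hlin n]
  -- find N with t N ≤ τ < t (N+1)
  have hex : ∃ n : ℕ, τ < t (n + 1) := by
    obtain ⟨m, hm⟩ := (htop.eventually (eventually_gt_atTop τ)).exists
    exact ⟨m, lt_of_lt_of_le hm (hmono (Nat.le_succ m))⟩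
  set N := Nat.find hex with hNdef
  have hN1 : τ < t (N + 1) := Nat.find_spec hex
  have hN0 : t N ≤ τ := by
    rcases Nat.eq_zero_or_pos N with h0 | h0
    · rw [h0, ht0]; exact hτ
    · obtain ⟨k, hk⟩ := Nat.exists_eq_succ_of_ne_zero h0.ne'
      rw [hk]
      have := Nat.find_min hex (m := k) (by omega)
      push_neg at this
      exact this
  -- induction bound on V (t n)
  set E : ℕ → ℝ := fun n => ∑ j ∈ Finset.range n, (if g j then -lc else ld) * (t (j+1) - t j)
    with hEdef
  have hind : ∀ n : ℕ, V (t n) ≤ a ^ n * Real.exp (E n) * V tbar₀ := by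
    intro n
    induction n with
    | zero => simp [hEdef, ht0]
    | succ k ih =>
      calc V (t (k+1)) ≤ a * (Real.exp ((if g k then -lc else ld) * (t (k+1) - t k)) * V (t k)) :=
            hVjump k
        _ ≤ a * (Real.exp ((if g k then -lc else ld) * (t (k+1) - t k)) *
              (a ^ k * Real.exp (E k) * V tbar₀)) := by
            apply mul_le_mul_of_nonneg_left _ ha0.le
            exact mul_le_mul_of_nonneg_left ih (Real.exp_pos _).le
        _ = a ^ (k+1) * Real.exp (E (k+1)) * V tbar₀ := by
            simp only [hEdef, Finset.sum_range_succ, Real.exp_add, pow_succ]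
            ring
  -- bound at τ
  have hstep : V τ ≤ a ^ N * Real.exp (E N + (if g N then -lc else ld) * (τ - t N)) * V tbar₀ := by
    calc V τ ≤ Real.exp ((if g N then -lc else ld) * (τ - t N)) * V (t N) :=
          hVint N τ hN0 hN1
      _ ≤ Real.exp ((if g N then -lc else ld) * (τ - t N)) *
            (a ^ N * Real.exp (E N) * V tbar₀) :=
          mul_le_mul_of_nonneg_left (hind N) (Real.exp_pos _).le
      _ = a ^ N * Real.exp (E N + (if g N then -lc else ld) * (τ - t N)) * V tbar₀ := by
          rw [Real.exp_add]; ring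
  -- w
  have hwzero : ∀ ℓ : ℕ, N + 1 ≤ ℓ → max 0 (min τ (t (ℓ + 1)) - max tbar₀ (t ℓ)) = 0 := by
    intro ℓ hℓ
    have h1 : τ ≤ t ℓ := le_trans hN1.le (hmono hℓ)
    have : min τ (t (ℓ + 1)) - max tbar₀ (t ℓ) ≤ 0 := by
      have := min_le_left τ (t (ℓ + 1))
      have := le_max_right tbar₀ (t ℓ)
      linarith
    simp [max_eq_left this]
  have hwlt : ∀ ℓ : ℕ, ℓ < N →
      max 0 (min τ (t (ℓ + 1)) - max tbar₀ (t ℓ)) = t (ℓ + 1) - t ℓ := by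
    intro ℓ hℓ
    have h1 : t (ℓ + 1) ≤ τ := le_trans (hmono (by omega : ℓ + 1 ≤ N)) hN0
    have h2 : min τ (t (ℓ + 1)) = t (ℓ + 1) := min_eq_right h1
    have h3 : max tbar₀ (t ℓ) = t ℓ := max_eq_right (htb ℓ)
    have h4 : (0:ℝ) ≤ t (ℓ + 1) - t ℓ := by have := hgap ℓ; linarith
    rw [h2, h3, max_eq_right h4]
  have hwN : max 0 (min τ (t (N + 1)) - max tbar₀ (t N)) = τ - t N := by
    have h2 : min τ (t (N + 1)) = τ := min_eq_left hN1.le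
    have h3 : max tbar₀ (t N) = t N := max_eq_right (htb N)
    rw [h2, h3, max_eq_right (by linarith : (0:ℝ) ≤ τ - t N)]
  have hwnn : ∀ ℓ : ℕ, 0 ≤ max 0 (min τ (t (ℓ + 1)) - max tbar₀ (t ℓ)) := fun ℓ => le_max_left _ _
  -- tsums as finite sums
  set Tc := ∑ ℓ ∈ Finset.range (N+1), (if g ℓ = true then max 0 (min τ (t (ℓ + 1)) - max tbar₀ (t ℓ)) else 0) with hTcdef
  set Td := ∑ ℓ ∈ Finset.range (N+1), (if g ℓ = false then max 0 (min τ (t (ℓ + 1)) - max tbar₀ (t ℓ)) else 0) with hTddef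
  have hTc : (∑' ℓ : ℕ, if g ℓ = true then max 0 (min τ (t (ℓ + 1)) - max tbar₀ (t ℓ)) else 0)
      = Tc := by
    apply tsum_eq_sum
    intro ℓ hℓ
    simp only [Finset.mem_range, not_lt] at hℓ
    rw [hwzero ℓ hℓ]
    simp
  have hTd : (∑' ℓ : ℕ, if g ℓ = false then max 0 (min τ (t (ℓ + 1)) - max tbar₀ (t ℓ)) else 0)
      = Td := by
    apply tsum_eq_sum
    intro ℓ hℓ
    simp only [Finset.mem_range, not_lt] at hℓ
    rw [hwzero ℓ hℓ]
    simp
  have hTT' : κ * Td ≤ Tc := by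
    have := hTT τ hτ
    rwa [hTc, hTd] at this
  have hTdnn : 0 ≤ Td := by
    apply Finset.sum_nonneg
    intro ℓ _
    split; exacts [hwnn ℓ, le_rfl]
  -- exponent identity
  have hexpo : E N + (if g N then -lc else ld) * (τ - t N) = -lc * Tc + ld * Td := by
    have h1 : E N + (if g N then -lc else ld) * (τ - t N)
        = ∑ ℓ ∈ Finset.range (N+1), (if g ℓ then -lc else ld) * max 0 (min τ (t (ℓ + 1)) - max tbar₀ (t ℓ)) := by
      rw [Finset.sum_range_succ, hwN]
      congr 1
      apply Finset.sum_congr rfl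
      intro ℓ hℓ
      rw [hwlt ℓ (Finset.mem_range.mp hℓ)]
    rw [h1, hTcdef, hTddef, Finset.mul_sum, Finset.mul_sum, ← Finset.sum_add_distrib]
    apply Finset.sum_congr rfl
    intro ℓ _
    cases hg : g ℓ <;> simp [hg] <;> ring
  -- total time identity
  have htot : Tc + Td = τ - tbar₀ := by
    rw [hTcdef, hTddef, ← Finset.sum_add_distrib]
    have h1 : ∀ ℓ ∈ Finset.range (N+1),
        ((if g ℓ = true then max 0 (min τ (t (ℓ + 1)) - max tbar₀ (t ℓ)) else 0) + (if g ℓ = false then max 0 (min τ (t (ℓ + 1)) - max tbar₀ (t ℓ)) else 0)) = max 0 (min τ (t (ℓ + 1)) - max tbar₀ (t ℓ)) := by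
      intro ℓ _
      cases hg : g ℓ <;> simp [hg]
    rw [Finset.sum_congr rfl h1, Finset.sum_range_succ, hwN,
        Finset.sum_congr rfl (fun ℓ hℓ => hwlt ℓ (Finset.mem_range.mp hℓ)),
        Finset.sum_range_sub, ht0]
    ring
  -- key inequality on the exponent
  have hκ2 : ld + lam ≤ κ * (lc - lam) := by
    have hpos : (0:ℝ) < lc - lam := by linarith
    exact (div_le_iff₀ hpos).mp hκ
  have hexple : -lc * Tc + ld * Td ≤ -lam * (τ - tbar₀) := by
    rw [← htot]
    nlinarith [mul_le_mul_of_nonneg_left hTT' (by linarith : (0:ℝ) ≤ lc - lam),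
      mul_le_mul_of_nonneg_right hκ2 hTdnn]
  -- dwell time count
  have hNcnt : (N : ℝ) * τd ≤ τ - tbar₀ := by
    have := hlin N
    linarith
  have hloga : 0 ≤ Real.log a := Real.log_nonneg ha
  have hpowN : (a : ℝ) ^ N = Real.exp ((N : ℝ) * Real.log a) := by
    rw [← Real.exp_log ha0, ← Real.exp_nat_mul, Real.log_exp]
  have hNlog : (N : ℝ) * Real.log a ≤ (τ - tbar₀) * (Real.log a / τd) := by
    have h1 : (N : ℝ) * Real.log a = ((N:ℝ) * τd) * (Real.log a / τd) := by
      field_simp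
    rw [h1]
    exact mul_le_mul_of_nonneg_right hNcnt (by positivity)
  -- finish
  calc V τ ≤ a ^ N * Real.exp (E N + (if g N then -lc else ld) * (τ - t N)) * V tbar₀ := hstep
    _ = Real.exp ((N : ℝ) * Real.log a + (E N + (if g N then -lc else ld) * (τ - t N)))
          * V tbar₀ := by rw [hpowN, ← Real.exp_add]
    _ ≤ Real.exp (-(lam - Real.log a / τd) * (τ - tbar₀)) * V tbar₀ := by
        apply mul_le_mul_of_nonneg_right _ (hVnonneg tbar₀ le_rfl)
        apply Real.exp_le_exp.mpr
        rw [hexpo]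
        nlinarith [hNlog, hexple]
end

section
/- Let τ_d > 0, T > 0, let Γ be a finite set with a nonempty subset G ⊆ Γ, and let σ : [t₀, ∞) → Γ be constant on each interval [t_ℓ, t_{ℓ+1}) of a strictly increasing sequence of switching times (t_ℓ) with t_{ℓ+1} − t_ℓ ≥ τ_d for all ℓ and t_ℓ → ∞. Suppose that for every t ≥ t₀ there exists s ∈ [t, t + T] with σ(s) ∈ G. Then there exists t̄₀ ∈ [t₀, t₀ + 2T] such that for all t ≥ t̄₀, the Lebesgue measure of {s ∈ [t̄₀, t) : σ(s) ∈ G} is at least (τ_d/(2T)) times the Lebesgue measure of {s ∈ [t̄₀, t) : σ(s) ∉ G}. -/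
open Filter MeasureTheory
open scoped ENNReal

private lemma fcr_exists_index (t : ℕ → ℝ) (hmono : StrictMono t)
    (htop : Tendsto t atTop atTop) (x : ℝ) (hx : t 0 ≤ x) :
    ∃ ℓ : ℕ, t ℓ ≤ x ∧ x < t (ℓ + 1) := by
  classical
  have h : ∃ n, x < t n := (htop.eventually (eventually_gt_atTop x)).exists
  have hn₀ : x < t (Nat.find h) := Nat.find_spec h
  have hpos : Nat.find h ≠ 0 := by
    intro h0
    rw [h0] at hn₀
    exact absurd hn₀ (not_lt.mpr hx)
  obtain ⟨m, hm⟩ := Nat.exists_eq_succ_of_ne_zero hpos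
  refine ⟨m, ?_, ?_⟩
  · exact not_lt.mp (Nat.find_min h (by omega))
  · rw [← Nat.succ_eq_add_one, ← hm]; exact hn₀

private lemma fcr_split_mem (p : ℝ → Prop) (c a b : ℝ) (hca : c ≤ a) (hab : a ≤ b)
    (hp : ∀ s, a ≤ s → s < b → p s) :
    {s : ℝ | s ∈ Set.Ico c b ∧ p s} = {s : ℝ | s ∈ Set.Ico c a ∧ p s} ∪ Set.Ico a b := by
  ext x
  simp only [Set.mem_setOf_eq, Set.mem_Ico, Set.mem_union]
  constructor
  · rintro ⟨⟨h1, h2⟩, h3⟩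
    rcases lt_or_ge x a with h | h
    · exact Or.inl ⟨⟨h1, h⟩, h3⟩
    · exact Or.inr ⟨h, h2⟩
  · rintro (⟨⟨h1, h2⟩, h3⟩ | ⟨h1, h2⟩)
    · exact ⟨⟨h1, lt_of_lt_of_le h2 hab⟩, h3⟩
    · exact ⟨⟨le_trans hca h1, h2⟩, hp x h1 h2⟩

private lemma fcr_split_other (q : ℝ → Prop) (c a b : ℝ) (hab : a ≤ b)
    (hq : ∀ s, a ≤ s → s < b → ¬ q s) :
    {s : ℝ | s ∈ Set.Ico c b ∧ q s} = {s : ℝ | s ∈ Set.Ico c a ∧ q s} := by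
  ext x
  simp only [Set.mem_setOf_eq, Set.mem_Ico]
  constructor
  · rintro ⟨⟨h1, h2⟩, h3⟩
    refine ⟨⟨h1, ?_⟩, h3⟩
    by_contra h
    exact hq x (not_lt.mp h) h2 h3
  · rintro ⟨⟨h1, h2⟩, h3⟩
    exact ⟨⟨h1, lt_of_lt_of_le h2 hab⟩, h3⟩

private lemma fcr_vol_ne_top (p : ℝ → Prop) (c x : ℝ) :
    volume {s : ℝ | s ∈ Set.Ico c x ∧ p s} ≠ ⊤ := by
  refine ne_top_of_le_ne_top ?_ (measure_mono fun y hy => hy.1)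
  rw [Real.volume_Ico]
  exact ENNReal.ofReal_ne_top

private lemma fcr_vol_split (p : ℝ → Prop) (c a b : ℝ) (hca : c ≤ a) (hab : a ≤ b)
    (hp : ∀ s, a ≤ s → s < b → p s) :
    (volume {s : ℝ | s ∈ Set.Ico c b ∧ p s}).toReal
      = (volume {s : ℝ | s ∈ Set.Ico c a ∧ p s}).toReal + (b - a) := by
  rw [fcr_split_mem p c a b hca hab hp]
  rw [measure_union (Set.disjoint_left.mpr fun x hx hx' =>
      absurd hx'.1 (not_le.mpr hx.1.2)) measurableSet_Ico]
  rw [ENNReal.toReal_add (fcr_vol_ne_top p c a)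
      (by rw [Real.volume_Ico]; exact ENNReal.ofReal_ne_top)]
  rw [Real.volume_Ico, ENNReal.toReal_ofReal (sub_nonneg.mpr hab)]

private lemma fcr_empty (c : ℝ) (p : ℝ → Prop) :
    (volume {s : ℝ | s ∈ Set.Ico c c ∧ p s}).toReal = 0 := by
  have : {s : ℝ | s ∈ Set.Ico c c ∧ p s} = ∅ := by
    ext x; simp [Set.Ico_self]
  rw [this]; simp

/-- Remark 1 of the paper.
If the switching signal `σ` (with dwell time `τ_d`) visits the good set `G` in every
window of length `T`, then there exists `t̄₀ ∈ [t₀, t₀ + 2T]` such that for all `t ≥ t̄₀`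
the activation time of `G` on `[t̄₀, t)` dominates `τ_d/(2T)` times the activation time
of the complement of `G`. -/
theorem frequently_connected_implies_activation_time_ratio
    (Γ : Type*) [Fintype Γ] (G : Set Γ) (hG : G.Nonempty)
    (t₀ τd T : ℝ) (hτd : 0 < τd) (hT : 0 < T)
    (t : ℕ → ℝ) (ht0 : t 0 = t₀)
    (hgap : ∀ ℓ : ℕ, τd ≤ t (ℓ + 1) - t ℓ)
    (htop : Tendsto t atTop atTop)
    (σ : ℝ → Γ)
    (hσconst : ∀ ℓ : ℕ, ∀ s : ℝ, t ℓ ≤ s → s < t (ℓ + 1) → σ s = σ (t ℓ))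
    (hfreq : ∀ τ : ℝ, t₀ ≤ τ → ∃ s ∈ Set.Icc τ (τ + T), σ s ∈ G) :
    ∃ tbar₀ ∈ Set.Icc t₀ (t₀ + 2 * T), ∀ τ : ℝ, tbar₀ ≤ τ →
      ENNReal.ofReal (τd / (2 * T)) * volume {s : ℝ | s ∈ Set.Ico tbar₀ τ ∧ σ s ∉ G}
        ≤ volume {s : ℝ | s ∈ Set.Ico tbar₀ τ ∧ σ s ∈ G} := by
  have hmono : StrictMono t := strictMono_nat_of_lt_succ fun n => by
    have := hgap n; linarith
  have ht0le : ∀ n, t₀ ≤ t n := fun n => by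
    rw [← ht0]; exact hmono.monotone (Nat.zero_le n)
  obtain ⟨s₀, ⟨hs₀1, hs₀2⟩, hs₀G⟩ := hfreq t₀ le_rfl
  obtain ⟨L, hL1, hL2⟩ := fcr_exists_index t hmono htop s₀ (by rw [ht0]; exact hs₀1)
  set c := t L with hc
  have hcG : σ c ∈ G := by
    have h := hσconst L s₀ hL1 hL2
    rwa [h] at hs₀G
  -- abbreviations
  have hct₀ : t₀ ≤ c := ht0le L
  -- the run-length bound: a bad run starting at u ≥ t₀ has length ≤ T
  have runbound : ∀ (u : ℝ) (n : ℕ), t₀ ≤ u →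
      (∀ s, u ≤ s → s < t n → σ s ∉ G) → t n - u ≤ T := by
    intro u n hu hbad
    by_contra hlt
    push_neg at hlt
    obtain ⟨s', ⟨h1', h2'⟩, hG'⟩ := hfreq u hu
    exact hbad s' h1' (by linarith) hG'
  -- the invariant, by induction
  have inv : ∀ k : ℕ, ∃ u, c ≤ u ∧ u ≤ t (L + 1 + k) ∧
      (∀ s, u ≤ s → s < t (L + 1 + k) → σ s ∉ G) ∧
      τd * (volume {s : ℝ | s ∈ Set.Ico c (t (L + 1 + k)) ∧ σ s ∉ G}).toReal + τd * T
        ≤ T * (volume {s : ℝ | s ∈ Set.Ico c (t (L + 1 + k)) ∧ σ s ∈ G}).toReal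
          + τd * (t (L + 1 + k) - u) := by
    intro k
    induction k with
    | zero =>
      refine ⟨t (L + 1), le_of_lt (hmono (by omega)), le_rfl,
        fun s hs1 hs2 _ => absurd hs2 (not_lt.mpr hs1), ?_⟩
      have hgood : ∀ s, c ≤ s → s < t (L + 1) → σ s ∈ G := fun s h1 h2 => by
        rw [hσconst L s h1 h2]; exact hcG
      have e1 : (volume {s : ℝ | s ∈ Set.Ico c (t (L + 1)) ∧ σ s ∈ G}).toReal
          = (volume {s : ℝ | s ∈ Set.Ico c c ∧ σ s ∈ G}).toReal + (t (L + 1) - c) :=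
        fcr_vol_split _ c c _ le_rfl (le_of_lt (hmono (by omega))) hgood
      have e2 : {s : ℝ | s ∈ Set.Ico c (t (L + 1)) ∧ σ s ∉ G}
          = {s : ℝ | s ∈ Set.Ico c c ∧ σ s ∉ G} :=
        fcr_split_other _ c c _ (le_of_lt (hmono (by omega)))
          (fun s h1 h2 => not_not_intro (hgood s h1 h2))
      rw [show L + 1 + 0 = L + 1 from rfl, e1, e2, fcr_empty, fcr_empty]
      have hg := hgap L
      nlinarith [mul_le_mul_of_nonneg_left hg hT.le]
    | succ k ih =>
      obtain ⟨u, hu1, hu2, hu3, hu4⟩ := ih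
      have hsucc : L + 1 + (k + 1) = (L + 1 + k) + 1 := by omega
      rw [hsucc]
      set n := L + 1 + k with hn
      have hcn : c ≤ t n := hmono.monotone (by omega)
      have hnn1 : t n ≤ t (n + 1) := le_of_lt (hmono (by omega))
      by_cases h : σ (t n) ∈ G
      · -- good interval: reset u to t (n+1)
        have hgood : ∀ s, t n ≤ s → s < t (n + 1) → σ s ∈ G := fun s h1 h2 => by
          rw [hσconst n s h1 h2]; exact h
        have e1 : (volume {s : ℝ | s ∈ Set.Ico c (t (n + 1)) ∧ σ s ∈ G}).toReal
            = (volume {s : ℝ | s ∈ Set.Ico c (t n) ∧ σ s ∈ G}).toReal + (t (n + 1) - t n) :=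
          fcr_vol_split _ c (t n) _ hcn hnn1 hgood
        have e2 : {s : ℝ | s ∈ Set.Ico c (t (n + 1)) ∧ σ s ∉ G}
            = {s : ℝ | s ∈ Set.Ico c (t n) ∧ σ s ∉ G} :=
          fcr_split_other _ c (t n) _ hnn1 (fun s h1 h2 => not_not_intro (hgood s h1 h2))
        have hrun : t n - u ≤ T := runbound u n (le_trans hct₀ hu1) hu3
        refine ⟨t (n + 1), le_trans hcn hnn1, le_rfl,
          fun s hs1 hs2 _ => absurd hs2 (not_lt.mpr hs1), ?_⟩
        rw [e1, e2]
        have hg := hgap n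
        nlinarith [mul_le_mul_of_nonneg_left hrun hτd.le,
          mul_le_mul_of_nonneg_left hg hT.le]
      · -- bad interval: keep u
        have hbad : ∀ s, t n ≤ s → s < t (n + 1) → σ s ∉ G := fun s h1 h2 => by
          rw [hσconst n s h1 h2]; exact h
        have e1 : (volume {s : ℝ | s ∈ Set.Ico c (t (n + 1)) ∧ σ s ∉ G}).toReal
            = (volume {s : ℝ | s ∈ Set.Ico c (t n) ∧ σ s ∉ G}).toReal + (t (n + 1) - t n) :=
          fcr_vol_split _ c (t n) _ hcn hnn1 hbad
        have e2 : {s : ℝ | s ∈ Set.Ico c (t (n + 1)) ∧ σ s ∈ G}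
            = {s : ℝ | s ∈ Set.Ico c (t n) ∧ σ s ∈ G} :=
          fcr_split_other _ c (t n) _ hnn1 hbad
        refine ⟨u, hu1, le_trans hu2 hnn1, ?_, ?_⟩
        · intro s hs1 hs2
          rcases lt_or_ge s (t n) with hlt | hge
          · exact hu3 s hs1 hlt
          · exact hbad s hge hs2
        · rw [e1, e2]
          linarith
  -- the claim at switching times
  have claim : ∀ n, L ≤ n →
      τd * (volume {s : ℝ | s ∈ Set.Ico c (t n) ∧ σ s ∉ G}).toReal
        ≤ T * (volume {s : ℝ | s ∈ Set.Ico c (t n) ∧ σ s ∈ G}).toReal := by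
    intro n hLn
    rcases eq_or_lt_of_le hLn with heq | hlt
    · rw [← heq, ← hc, fcr_empty, fcr_empty]
      simp
    · obtain ⟨k, hk⟩ : ∃ k, n = L + 1 + k := ⟨n - L - 1, by omega⟩
      subst hk
      obtain ⟨u, hu1, hu2, hu3, hu4⟩ := inv k
      have hrun : t (L + 1 + k) - u ≤ T := runbound u _ (le_trans hct₀ hu1) hu3
      nlinarith [mul_le_mul_of_nonneg_left hrun hτd.le]
  refine ⟨c, ⟨hct₀, by linarith⟩, ?_⟩
  intro τ hτ
  have ht₀τ : t₀ ≤ τ := le_trans hct₀ hτ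
  obtain ⟨ℓ, hℓ1, hℓ2⟩ := fcr_exists_index t hmono htop τ (by rw [ht0]; exact ht₀τ)
  have hLℓ : L ≤ ℓ := by
    by_contra hcon
    push_neg at hcon
    have : t (ℓ + 1) ≤ c := hmono.monotone (by omega)
    linarith
  have hcℓ : c ≤ t ℓ := hmono.monotone hLℓ
  -- real-valued key inequality
  have key : τd * (volume {s : ℝ | s ∈ Set.Ico c τ ∧ σ s ∉ G}).toReal
      ≤ T * (volume {s : ℝ | s ∈ Set.Ico c τ ∧ σ s ∈ G}).toReal := by
    by_cases h : σ (t ℓ) ∈ G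
    · have hgood : ∀ s, t ℓ ≤ s → s < τ → σ s ∈ G := fun s h1 h2 => by
        rw [hσconst ℓ s h1 (lt_trans h2 hℓ2)]; exact h
      have e1 : (volume {s : ℝ | s ∈ Set.Ico c τ ∧ σ s ∈ G}).toReal
          = (volume {s : ℝ | s ∈ Set.Ico c (t ℓ) ∧ σ s ∈ G}).toReal + (τ - t ℓ) :=
        fcr_vol_split _ c (t ℓ) τ hcℓ hℓ1 hgood
      have e2 : {s : ℝ | s ∈ Set.Ico c τ ∧ σ s ∉ G}
          = {s : ℝ | s ∈ Set.Ico c (t ℓ) ∧ σ s ∉ G} :=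
        fcr_split_other _ c (t ℓ) τ hℓ1 (fun s h1 h2 => not_not_intro (hgood s h1 h2))
      rw [e1, e2]
      have := claim ℓ hLℓ
      nlinarith [mul_nonneg hT.le (sub_nonneg.mpr hℓ1)]
    · have hbad : ∀ s, τ ≤ s → s < t (ℓ + 1) → σ s ∉ G := fun s h1 h2 => by
        rw [hσconst ℓ s (le_trans hℓ1 h1) h2]; exact h
      have e1 : (volume {s : ℝ | s ∈ Set.Ico c (t (ℓ + 1)) ∧ σ s ∉ G}).toReal
          = (volume {s : ℝ | s ∈ Set.Ico c τ ∧ σ s ∉ G}).toReal + (t (ℓ + 1) - τ) :=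
        fcr_vol_split _ c τ _ hτ (le_of_lt hℓ2) hbad
      have e2 : {s : ℝ | s ∈ Set.Ico c (t (ℓ + 1)) ∧ σ s ∈ G}
          = {s : ℝ | s ∈ Set.Ico c τ ∧ σ s ∈ G} :=
        fcr_split_other _ c τ _ (le_of_lt hℓ2) hbad
      have hcl := claim (ℓ + 1) (by omega)
      rw [e1, e2] at hcl
      nlinarith [mul_nonneg hτd.le (sub_nonneg.mpr (le_of_lt hℓ2))]
  -- convert to ENNReal
  have hBnn : (0:ℝ) ≤ (volume {s : ℝ | s ∈ Set.Ico c τ ∧ σ s ∉ G}).toReal :=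
    ENNReal.toReal_nonneg
  have hGnn : (0:ℝ) ≤ (volume {s : ℝ | s ∈ Set.Ico c τ ∧ σ s ∈ G}).toReal :=
    ENNReal.toReal_nonneg
  have hreal : τd / (2 * T) * (volume {s : ℝ | s ∈ Set.Ico c τ ∧ σ s ∉ G}).toReal
      ≤ (volume {s : ℝ | s ∈ Set.Ico c τ ∧ σ s ∈ G}).toReal := by
    rw [div_mul_eq_mul_div, div_le_iff₀ (by positivity)]
    nlinarith [key, mul_nonneg hT.le hGnn]
  calc ENNReal.ofReal (τd / (2 * T)) * volume {s : ℝ | s ∈ Set.Ico c τ ∧ σ s ∉ G}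
      = ENNReal.ofReal (τd / (2 * T) *
          (volume {s : ℝ | s ∈ Set.Ico c τ ∧ σ s ∉ G}).toReal) := by
        rw [ENNReal.ofReal_mul (by positivity),
          ENNReal.ofReal_toReal (fcr_vol_ne_top _ c τ)]
    _ ≤ ENNReal.ofReal (volume {s : ℝ | s ∈ Set.Ico c τ ∧ σ s ∈ G}).toReal :=
        ENNReal.ofReal_le_ofReal hreal
    _ = volume {s : ℝ | s ∈ Set.Ico c τ ∧ σ s ∈ G} :=
        ENNReal.ofReal_toReal (fcr_vol_ne_top _ c τ)
end
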